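/- arXiv:1010.1194 — 5 statements merged into one kernel-verified Lean document; each statement's English description precedes it below -/
import Mathlib

section
/- Let α > -1/2, f a smooth function on ℝ, and g a compactly supported continuous function on ℝ. Then ∫_ℝ χ_α(f)(x) g(x) |x|^{2α+1} dx = ∫_ℝ f(x) W_α(g)(x) dx, where W_α(g)(y) = (2Γ(α+1)/(√π Γ(α+1/2))) ∫_{|y|}^∞ (x²−y²)^{α−1/2} x g(sgn(y)·x) dx for y ≠ 0. -/
open MeasureTheory Real

lemma subst_id {E : Type*} [NormedAddCommGroup E] [NormedSpace ℝ E] (p : ℝ) (f : ℝ → E)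
    {x : ℝ} (hx : 0 < x) :
    (∫ y in (0:ℝ)..x, (((x^2 - y^2 : ℝ) ^ p : ℝ)) • f y)
      = (x ^ (2*p+1) : ℝ) • ∫ t in (0:ℝ)..1, (((1 - t^2 : ℝ) ^ p : ℝ)) • f (x * t) := by
  have h := intervalIntegral.integral_comp_mul_right
      (a := 0) (b := 1) (fun y => (((x^2 - y^2 : ℝ) ^ p : ℝ)) • f y) hx.ne'
  rw [zero_mul, one_mul] at h
  have h2 : (∫ y in (0:ℝ)..x, (((x^2 - y^2 : ℝ) ^ p : ℝ)) • f y)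
      = x • ∫ t in (0:ℝ)..1, (((x^2 - (t*x)^2 : ℝ) ^ p : ℝ)) • f (t * x) := by
    rw [h, smul_smul, mul_inv_cancel₀ hx.ne', one_smul]
  rw [h2, ← intervalIntegral.integral_smul, ← intervalIntegral.integral_smul]
  refine intervalIntegral.integral_congr fun t ht => ?_
  rw [Set.uIcc_of_le (zero_le_one)] at ht
  have h1 : (0:ℝ) ≤ 1 - t^2 := by nlinarith [ht.1, ht.2]
  have he : x^2 - (t*x)^2 = x^2 * (1 - t^2) := by ring
  rw [he, Real.mul_rpow (by positivity) h1, mul_comm t x]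
  rw [smul_smul, smul_smul]
  congr 1
  have hx2 : (x:ℝ)^2 = x ^ (2:ℝ) := by
    rw [← Real.rpow_natCast x 2]; norm_num
  rw [hx2, ← Real.rpow_mul hx.le]
  rw [show 2*p+1 = 1 + 2*p by ring, Real.rpow_add hx, Real.rpow_one]
  ring

lemma kernel_intOn (p : ℝ) (hp : -1 < p) {x : ℝ} (hx : 0 < x) :
    IntegrableOn (fun y => ((x^2 - y^2 : ℝ) ^ p : ℝ)) (Set.Ioc 0 x) := by
  have h1 : IntervalIntegrable (fun y : ℝ => (x - y) ^ p) volume 0 x := by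
    have := (intervalIntegral.intervalIntegrable_rpow' (a := 0) (b := x) hp).comp_sub_left x
    simpa using this.symm
  have h2 : IntervalIntegrable (fun y : ℝ => (x - y) ^ p * (x + y) ^ p) volume 0 x := by
    refine h1.mul_continuousOn ?_
    refine ContinuousOn.rpow_const ?_ ?_
    · exact (continuous_const.add continuous_id).continuousOn
    · intro y hy
      rw [Set.uIcc_of_le hx.le] at hy
      left; nlinarith [hy.1]
  have h3 : IntegrableOn (fun y : ℝ => (x - y) ^ p * (x + y) ^ p) (Set.Ioc 0 x) :=
    (intervalIntegrable_iff_integrableOn_Ioc_of_le hx.le).mp h2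
  refine h3.congr_fun (fun y hy => ?_) measurableSet_Ioc
  dsimp only; rw [← Real.mul_rpow (by nlinarith [hy.2] : (0:ℝ) ≤ x - y) (by nlinarith [hy.1] : (0:ℝ) ≤ x + y)]
  ring_nf

noncomputable def BSconst (a : ℝ) : ℝ :=
  2 * Real.Gamma (a + 1) / (Real.sqrt Real.pi * Real.Gamma (a + 1/2))

noncomputable def BSkernel (a : ℝ) (l : ℂ) (x : ℝ) : ℂ :=
  (BSconst a : ℂ) *
    ∫ t in (0:ℝ)..1, ((((1 - t^2 : ℝ) ^ (a - 1/2) : ℝ) : ℂ)) * Complex.exp (l * x * t)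

/-- Bessel-Struve intertwining operator. -/
noncomputable def chi (a : ℝ) (f : ℝ → ℂ) (x : ℝ) : ℂ :=
  (BSconst a : ℂ) *
    ∫ t in (0:ℝ)..1, ((((1 - t^2 : ℝ) ^ (a - 1/2) : ℝ) : ℂ)) * f (x * t)

/-- Weyl integral transform associated to the Bessel-Struve operator. -/
noncomputable def Weyl (a : ℝ) (g : ℝ → ℂ) (y : ℝ) : ℂ :=
  (BSconst a : ℂ) *
    ∫ x in Set.Ioi |y|, ((((x^2 - y^2 : ℝ) ^ (a - 1/2) : ℝ) : ℂ)) * (x : ℂ) * g (Real.sign y * x)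

lemma main_pos (a : ℝ) (ha : -1/2 < a) (f g : ℝ → ℂ)
    (hf : Continuous f) (hg : Continuous g) (hgs : HasCompactSupport g) :
    ((∫ x in Set.Ioi (0:ℝ), chi a f x * g x * ((x ^ (2*a+1) : ℝ) : ℂ))
       = ∫ y in Set.Ioi (0:ℝ), f y *
           ((BSconst a : ℂ) * ∫ x in Set.Ioi y, (((x^2 - y^2 : ℝ) ^ (a - 1/2) : ℝ) : ℂ) * (x:ℂ) * g x))
    ∧ IntegrableOn (fun x => chi a f x * g x * ((x ^ (2*a+1) : ℝ) : ℂ)) (Set.Ioi 0)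
    ∧ IntegrableOn (fun y => f y *
           ((BSconst a : ℂ) * ∫ x in Set.Ioi y, (((x^2 - y^2 : ℝ) ^ (a - 1/2) : ℝ) : ℂ) * (x:ℂ) * g x))
        (Set.Ioi 0) := by
  set p : ℝ := a - 1/2 with hpdef
  have hp : -1 < p := by rw [hpdef]; linarith
  set φ : ℝ × ℝ → ℂ := fun q =>
    (((q.1^2 - q.2^2 : ℝ) ^ p : ℝ) : ℂ) * q.1 * g q.1 * f q.2 with hφdef
  set T : Set (ℝ × ℝ) := {q : ℝ × ℝ | 0 < q.2 ∧ q.2 < q.1} with hTdef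
  have hT : MeasurableSet T :=
    (measurableSet_lt measurable_const measurable_snd).inter
      (measurableSet_lt measurable_snd measurable_fst)
  set H : ℝ × ℝ → ℂ := T.indicator φ with hHdef
  have hφm : AEStronglyMeasurable φ ((volume : Measure ℝ).prod volume) := by
    apply Measurable.aestronglyMeasurable
    have h0 : Measurable fun x : ℝ => x ^ p := by measurability
    have h1 : Measurable fun q : ℝ × ℝ => ((q.1^2 - q.2^2 : ℝ) ^ p : ℝ) :=
      h0.comp ((measurable_fst.pow_const 2).sub (measurable_snd.pow_const 2))
    exact (((Complex.measurable_ofReal.comp h1).mul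
        (Complex.measurable_ofReal.comp measurable_fst)).mul
        (hg.measurable.comp measurable_fst)).mul (hf.measurable.comp measurable_snd)
  have hHm : AEStronglyMeasurable H ((volume : Measure ℝ).prod volume) := hφm.indicator hT
  have hsec : ∀ x : ℝ, (fun y => H (x, y)) = (Set.Ioo 0 x).indicator (fun y => φ (x, y)) := by
    intro x; funext y
    simp only [hHdef, Set.indicator_apply, hTdef, Set.mem_setOf_eq, Set.mem_Ioo]
  have hsecy : ∀ y : ℝ, 0 < y →
      (fun x => H (x, y)) = (Set.Ioi y).indicator (fun x => φ (x, y)) := by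
    intro y hy; funext x
    simp only [hHdef, Set.indicator_apply, hTdef, Set.mem_setOf_eq, Set.mem_Ioi, hy, true_and]
  -- bound data
  obtain ⟨R0, hR0⟩ := hgs.isBounded.subset_closedBall 0
  set R : ℝ := max R0 1 with hRdef
  have hR1 : (0:ℝ) < R := lt_of_lt_of_le one_pos (le_max_right _ _)
  have hgR : ∀ x : ℝ, R < x → g x = 0 := by
    intro x hx
    apply image_eq_zero_of_notMem_tsupport
    intro hmem
    have := hR0 hmem
    rw [Metric.mem_closedBall, Real.dist_eq, sub_zero] at this
    have : x ≤ R0 := le_trans (le_abs_self x) this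
    have : x ≤ R := le_trans this (le_max_left _ _)
    linarith
  obtain ⟨C1, hC1⟩ := hgs.exists_bound_of_continuousOn hg.continuousOn
  set Cg : ℝ := max C1 0 with hCgdef
  have hCg : ∀ x, ‖g x‖ ≤ Cg := by
    intro x
    by_cases hx : x ∈ tsupport g
    · exact le_trans (hC1 x hx) (le_max_left _ _)
    · rw [image_eq_zero_of_notMem_tsupport hx]; simp [hCgdef]
  have hCg0 : 0 ≤ Cg := le_max_right _ _
  obtain ⟨C2, hC2⟩ := (isCompact_Icc (a := (0:ℝ)) (b := R)).exists_bound_of_continuousOn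
    hf.continuousOn
  set Cf : ℝ := max C2 0 with hCfdef
  have hCf : ∀ y ∈ Set.Icc (0:ℝ) R, ‖f y‖ ≤ Cf := fun y hy =>
    le_trans (hC2 y hy) (le_max_left _ _)
  have hCf0 : 0 ≤ Cf := le_max_right _ _
  set I₀ : ℝ := ∫ t in (0:ℝ)..1, ((1 - t^2 : ℝ) ^ p : ℝ) with hI₀def
  have hI₀ : 0 ≤ I₀ := by
    apply intervalIntegral.integral_nonneg zero_le_one
    intro u hu
    exact Real.rpow_nonneg (by nlinarith [hu.1, hu.2]) _
  -- kernel integral value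
  have hKval : ∀ x : ℝ, 0 < x →
      (∫ y in Set.Ioo (0:ℝ) x, ((x^2 - y^2 : ℝ) ^ p : ℝ)) = x ^ (2*p+1) * I₀ := by
    intro x hx
    rw [← MeasureTheory.integral_Ioc_eq_integral_Ioo,
      ← intervalIntegral.integral_of_le hx.le]
    have := subst_id p (fun _ => (1:ℝ)) hx
    simpa [smul_eq_mul] using this
  -- kernel integrability
  have hker : ∀ x : ℝ, 0 < x →
      IntegrableOn (fun y => ((x^2 - y^2 : ℝ) ^ p : ℝ)) (Set.Ioo 0 x) := fun x hx =>
    (kernel_intOn p hp hx).mono_set Set.Ioo_subset_Ioc_self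
  -- slice integrability
  have hsliceInt : ∀ x : ℝ, 0 < x → x ≤ R → IntegrableOn (fun y => φ (x, y)) (Set.Ioo 0 x) := by
    intro x hx hxR
    have hbase : IntegrableOn (fun y => (((x^2 - y^2 : ℝ) ^ p : ℝ) : ℂ)) (Set.Ioo 0 x) :=
      (hker x hx).ofReal
    have h1 : Integrable (fun y => ((x:ℂ) * g x * f y) * (((x^2 - y^2 : ℝ) ^ p : ℝ) : ℂ))
        (volume.restrict (Set.Ioo 0 x)) := by
      apply MeasureTheory.Integrable.bdd_mul (c := R * Cg * Cf) hbase
      · exact (continuous_const.mul hf).aestronglyMeasurable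
      · apply MeasureTheory.ae_restrict_of_forall_mem measurableSet_Ioo
        intro y hy
        have hfy : ‖f y‖ ≤ Cf := hCf y ⟨hy.1.le, le_trans hy.2.le hxR⟩
        calc ‖(x:ℂ) * g x * f y‖ = |x| * ‖g x‖ * ‖f y‖ := by
              rw [norm_mul, norm_mul, Complex.norm_real]; rfl
          _ ≤ R * Cg * Cf := by
              apply mul_le_mul (mul_le_mul ?_ (hCg x) (norm_nonneg _) hR1.le) hfy
                (norm_nonneg _) (by positivity)
              rwa [abs_of_pos hx]
    refine MeasureTheory.IntegrableOn.congr_fun h1 (fun y _ => ?_) measurableSet_Ioo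
    simp only [hφdef]; ring
  -- vanishing of slices
  have hzero_le : ∀ x : ℝ, x ≤ 0 → (fun y => H (x, y)) = (fun _ => (0:ℂ)) := by
    intro x hx
    rw [hsec x, Set.Ioo_eq_empty (not_lt.2 hx)]
    funext y; simp
  have hzero_R : ∀ x : ℝ, R < x → (fun y => H (x, y)) = (fun _ => (0:ℂ)) := by
    intro x hx
    rw [hsec x]
    funext y
    simp [hφdef, hgR x hx]
  have hzero_y : ∀ y : ℝ, y ≤ 0 → (fun x => H (x, y)) = (fun _ => (0:ℂ)) := by
    intro y hy
    funext x
    rw [hHdef]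
    apply Set.indicator_of_notMem
    intro hmem
    exact absurd hmem.1 (not_lt.2 hy)
  -- a.e. slice integrability
  have haeslice : ∀ x : ℝ, Integrable (fun y => H (x, y)) volume := by
    intro x
    rcases le_or_gt x 0 with hx | hx
    · rw [hzero_le x hx]; exact integrable_zero _ _ _
    rcases le_or_gt x R with hxR | hxR
    · rw [hsec x]
      exact ((hsliceInt x hx hxR).integrable_indicator measurableSet_Ioo)
    · rw [hzero_R x hxR]; exact integrable_zero _ _ _
  set D : ℝ → ℝ := (Set.Ioc (0:ℝ) R).indicator (fun x => (R*Cg*Cf*I₀) * x ^ (2*p+1)) with hDdef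
  have hDint : Integrable D volume := by
    have h1 : IntervalIntegrable (fun x : ℝ => x ^ (2*p+1)) volume 0 R :=
      intervalIntegral.intervalIntegrable_rpow' (by linarith)
    have h2 : IntegrableOn (fun x : ℝ => x ^ (2*p+1)) (Set.Ioc 0 R) :=
      (intervalIntegrable_iff_integrableOn_Ioc_of_le hR1.le).mp h1
    exact MeasureTheory.IntegrableOn.integrable_indicator (h2.const_mul _) measurableSet_Ioc
  have hbound : ∀ x : ℝ, (∫ y, ‖H (x, y)‖) ≤ D x := by
    intro x
    by_cases hx : x ∈ Set.Ioc (0:ℝ) R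
    · have hnorm : (fun y => ‖H (x, y)‖)
          = fun y => (Set.Ioo (0:ℝ) x).indicator (fun y => ‖φ (x, y)‖) y := by
        funext y
        rw [show H (x, y) = ((Set.Ioo (0:ℝ) x).indicator (fun y => φ (x, y)) y) from
          congrFun (hsec x) y, norm_indicator_eq_indicator_norm]
      calc (∫ y, ‖H (x, y)‖) = ∫ y in Set.Ioo (0:ℝ) x, ‖φ (x, y)‖ := by
            rw [hnorm, MeasureTheory.integral_indicator measurableSet_Ioo]
        _ ≤ ∫ y in Set.Ioo (0:ℝ) x, ((x^2 - y^2 : ℝ) ^ p : ℝ) * (R * Cg * Cf) := by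
            apply MeasureTheory.setIntegral_mono_on
              ((hsliceInt x hx.1 hx.2).norm) ((hker x hx.1).mul_const _) measurableSet_Ioo
            intro y hy
            have hw0 : (0:ℝ) ≤ (x^2 - y^2 : ℝ) ^ p := Real.rpow_nonneg (by nlinarith [hy.1, hy.2]) _
            have hfy : ‖f y‖ ≤ Cf := hCf y ⟨hy.1.le, le_trans hy.2.le hx.2⟩
            calc ‖φ (x, y)‖ = ((x^2 - y^2 : ℝ) ^ p) * (|x| * (‖g x‖ * ‖f y‖)) := by
                  simp only [hφdef, norm_mul, Complex.norm_real]
                  rw [Real.norm_eq_abs, Real.norm_eq_abs, abs_of_nonneg hw0]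
                  ring
              _ ≤ ((x^2 - y^2 : ℝ) ^ p) * (R * (Cg * Cf)) := by
                  gcongr
                  · rw [abs_of_pos hx.1]; exact hx.2
                  · exact hCg x
              _ = ((x^2 - y^2 : ℝ) ^ p) * (R * Cg * Cf) := by ring
        _ = (x ^ (2*p+1) * I₀) * (R * Cg * Cf) := by
            rw [MeasureTheory.integral_mul_const, hKval x hx.1]
        _ = (R*Cg*Cf*I₀) * x ^ (2*p+1) := by ring
        _ = D x := by rw [hDdef, Set.indicator_of_mem hx]
    · have hzero : (fun y => H (x, y)) = (fun _ => (0:ℂ)) := by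
        rcases le_or_gt x 0 with h | h
        · exact hzero_le x h
        · have hR : R < x := by
            by_contra hc
            exact hx ⟨h, not_lt.1 hc⟩
          exact hzero_R x hR
      rw [hDdef, Set.indicator_of_notMem hx]
      have h0 : ∀ y : ℝ, H (x, y) = 0 := fun y => congrFun hzero y
      simp [h0]
  have hH : Integrable H ((volume : Measure ℝ).prod volume) := by
    refine (MeasureTheory.integrable_prod_iff hHm).2 ⟨?_, ?_⟩
    · exact Filter.Eventually.of_forall haeslice
    · refine MeasureTheory.Integrable.mono' hDint (hHm.norm.integral_prod_right') ?_
      refine Filter.Eventually.of_forall fun x => ?_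
      rw [Real.norm_of_nonneg (MeasureTheory.integral_nonneg fun y => norm_nonneg _)]
      exact hbound x
  have inner_eq : ∀ x ∈ Set.Ioi (0:ℝ),
      (BSconst a : ℂ) * (∫ y, H (x, y)) = chi a f x * g x * ((x ^ (2*a+1) : ℝ) : ℂ) := by
    intro x hx
    rw [Set.mem_Ioi] at hx
    have h1 : (∫ y, H (x, y)) = ∫ y in (0:ℝ)..x, φ (x, y) := by
      rw [hsec x, MeasureTheory.integral_indicator measurableSet_Ioo,
        ← MeasureTheory.integral_Ioc_eq_integral_Ioo, ← intervalIntegral.integral_of_le hx.le]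
    have h2 : (∫ y in (0:ℝ)..x, φ (x, y))
        = ((x:ℂ) * g x) * ∫ y in (0:ℝ)..x, (((x^2 - y^2 : ℝ) ^ p : ℝ) : ℂ) * f y := by
      rw [← intervalIntegral.integral_const_mul]
      apply intervalIntegral.integral_congr
      intro y _
      simp only [hφdef]; ring
    have h3 := subst_id p f hx
    simp only [Complex.real_smul] at h3
    rw [h1, h2, h3]
    simp only [chi, ← hpdef]
    have hxx : ((x:ℝ) ^ (2*a+1) : ℝ) = x * x ^ (2*p+1) := by
      have h4 : (2*p+1 : ℝ) = 2*a := by rw [hpdef]; ring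
      rw [h4, Real.rpow_add hx, Real.rpow_one]; ring
    rw [hxx]
    push_cast
    ring
  have outer_eq : ∀ y ∈ Set.Ioi (0:ℝ),
      (BSconst a : ℂ) * (∫ x, H (x, y))
        = f y * ((BSconst a : ℂ) *
            ∫ x in Set.Ioi y, (((x^2 - y^2 : ℝ) ^ p : ℝ) : ℂ) * (x:ℂ) * g x) := by
    intro y hy
    rw [Set.mem_Ioi] at hy
    rw [hsecy y hy, MeasureTheory.integral_indicator measurableSet_Ioi]
    have h2 : (∫ x in Set.Ioi y, φ (x, y))
        = (∫ x in Set.Ioi y, (((x^2 - y^2 : ℝ) ^ p : ℝ) : ℂ) * (x:ℂ) * g x) * f y := by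
      rw [← MeasureTheory.integral_mul_const]
    rw [h2]; ring
  have hswap : (∫ x, ∫ y, H (x, y)) = ∫ y, ∫ x, H (x, y) :=
    MeasureTheory.integral_integral_swap (f := fun x y => H (x, y)) hH
  refine ⟨?_, ?_, ?_⟩
  · calc (∫ x in Set.Ioi (0:ℝ), chi a f x * g x * ((x ^ (2*a+1) : ℝ) : ℂ))
        = ∫ x in Set.Ioi (0:ℝ), (BSconst a : ℂ) * (∫ y, H (x, y)) :=
          MeasureTheory.setIntegral_congr_fun measurableSet_Ioi
            (fun x hx => (inner_eq x hx).symm)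
      _ = (BSconst a : ℂ) * ∫ x in Set.Ioi (0:ℝ), (∫ y, H (x, y)) := by
          rw [MeasureTheory.integral_const_mul]
      _ = (BSconst a : ℂ) * ∫ x, (∫ y, H (x, y)) := by
          congr 1
          apply MeasureTheory.setIntegral_eq_integral_of_forall_compl_eq_zero
          intro x hx
          rw [Set.mem_Ioi] at hx
          rw [hzero_le x (not_lt.1 hx)]
          simp
      _ = (BSconst a : ℂ) * ∫ y, (∫ x, H (x, y)) := by rw [hswap]
      _ = (BSconst a : ℂ) * ∫ y in Set.Ioi (0:ℝ), (∫ x, H (x, y)) := by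
          congr 1
          symm
          apply MeasureTheory.setIntegral_eq_integral_of_forall_compl_eq_zero
          intro y hy
          rw [Set.mem_Ioi] at hy
          rw [hzero_y y (not_lt.1 hy)]
          simp
      _ = ∫ y in Set.Ioi (0:ℝ), (BSconst a : ℂ) * (∫ x, H (x, y)) := by
          rw [MeasureTheory.integral_const_mul]
      _ = _ := MeasureTheory.setIntegral_congr_fun measurableSet_Ioi
            (fun y hy => outer_eq y hy)
  · have hmargx : Integrable (fun x => ∫ y, H (x, y)) volume := hH.integral_prod_left
    exact MeasureTheory.IntegrableOn.congr_fun
      ((hmargx.const_mul (BSconst a : ℂ)).integrableOn)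
      (fun x hx => inner_eq x hx) measurableSet_Ioi
  · have hmargy : Integrable (fun y => ∫ x, H (x, y)) volume := hH.integral_prod_right
    exact MeasureTheory.IntegrableOn.congr_fun
      ((hmargy.const_mul (BSconst a : ℂ)).integrableOn)
      (fun y hy => outer_eq y hy) measurableSet_Ioi

theorem chi_Weyl_duality (a : ℝ) (ha : -1/2 < a) (f g : ℝ → ℂ)
    (hf : ContDiff ℝ (⊤ : ℕ∞) f) (hg : Continuous g) (hgs : HasCompactSupport g) :
    ∫ x : ℝ, chi a f x * g x * ((|x| ^ (2*a+1) : ℝ) : ℂ) = ∫ x : ℝ, f x * Weyl a g x := by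
  have hfc : Continuous f := hf.continuous
  set fn : ℝ → ℂ := fun x => f (-x) with hfndef
  set gn : ℝ → ℂ := fun x => g (-x) with hgndef
  have hfnc : Continuous fn := hfc.comp continuous_neg
  have hgnc : Continuous gn := hg.comp continuous_neg
  have hgns : HasCompactSupport gn := hgs.comp_homeomorph (Homeomorph.neg ℝ)
  obtain ⟨hPeq, hPint1, hPint2⟩ := main_pos a ha f g hfc hg hgs
  obtain ⟨hNeq, hNint1, hNint2⟩ := main_pos a ha fn gn hfnc hgnc hgns
  set L : ℝ → ℂ := fun x => chi a f x * g x * ((|x| ^ (2*a+1) : ℝ) : ℂ) with hLdef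
  set M : ℝ → ℂ := fun y => f y * Weyl a g y with hMdef
  have eL1 : ∀ x ∈ Set.Ioi (0:ℝ), L x = chi a f x * g x * ((x ^ (2*a+1) : ℝ) : ℂ) := by
    intro x hx
    rw [Set.mem_Ioi] at hx
    simp only [hLdef, abs_of_pos hx]
  have echi : ∀ x : ℝ, chi a f (-x) = chi a fn x := by
    intro x
    simp only [chi, hfndef]
    congr 1
    apply intervalIntegral.integral_congr
    intro t _
    simp only [neg_mul]
  have eL2 : ∀ x ∈ Set.Ioi (0:ℝ), L (-x) = chi a fn x * gn x * ((x ^ (2*a+1) : ℝ) : ℂ) := by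
    intro x hx
    rw [Set.mem_Ioi] at hx
    simp only [hLdef, hgndef, abs_neg, abs_of_pos hx, echi x]
  have eW1 : ∀ y ∈ Set.Ioi (0:ℝ), M y = f y * ((BSconst a : ℂ) *
      ∫ x in Set.Ioi y, (((x^2 - y^2 : ℝ) ^ (a - 1/2) : ℝ) : ℂ) * (x:ℂ) * g x) := by
    intro y hy
    rw [Set.mem_Ioi] at hy
    simp only [hMdef, Weyl, abs_of_pos hy, Real.sign_of_pos hy, one_mul]
  have eW2 : ∀ y ∈ Set.Ioi (0:ℝ), M (-y) = fn y * ((BSconst a : ℂ) *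
      ∫ x in Set.Ioi y, (((x^2 - y^2 : ℝ) ^ (a - 1/2) : ℝ) : ℂ) * (x:ℂ) * gn x) := by
    intro y hy
    rw [Set.mem_Ioi] at hy
    simp only [hMdef, hfndef, hgndef, Weyl, abs_neg, abs_of_pos hy,
      Real.sign_of_neg (neg_lt_zero.mpr hy), neg_sq, neg_one_mul]
  -- integrability
  have hLpos : IntegrableOn L (Set.Ioi 0) :=
    MeasureTheory.IntegrableOn.congr_fun hPint1 (fun x hx => (eL1 x hx).symm) measurableSet_Ioi
  have hLnegIoi : IntegrableOn (fun x => L (-x)) (Set.Ioi 0) :=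
    MeasureTheory.IntegrableOn.congr_fun hNint1 (fun x hx => (eL2 x hx).symm) measurableSet_Ioi
  have hLneg : IntegrableOn L (Set.Iio 0) := by
    refine (MeasurePreserving.integrableOn_comp_preimage
        (Measure.measurePreserving_neg (volume : Measure ℝ))
        (Homeomorph.neg ℝ).measurableEmbedding (f := L) (s := Set.Iio (0:ℝ))).1 ?_
    have hs : (Neg.neg : ℝ → ℝ) ⁻¹' (Set.Iio (0:ℝ)) = Set.Ioi 0 := by ext u; simp
    rw [hs]
    exact hLnegIoi
  have hLIic : IntegrableOn L (Set.Iic 0) :=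
    (integrableOn_Iic_iff_integrableOn_Iio (f := L)).mpr hLneg
  have hMpos : IntegrableOn M (Set.Ioi 0) :=
    MeasureTheory.IntegrableOn.congr_fun hPint2 (fun y hy => (eW1 y hy).symm) measurableSet_Ioi
  have hMnegIoi : IntegrableOn (fun y => M (-y)) (Set.Ioi 0) :=
    MeasureTheory.IntegrableOn.congr_fun hNint2 (fun y hy => (eW2 y hy).symm) measurableSet_Ioi
  have hMneg : IntegrableOn M (Set.Iio 0) := by
    refine (MeasurePreserving.integrableOn_comp_preimage
        (Measure.measurePreserving_neg (volume : Measure ℝ))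
        (Homeomorph.neg ℝ).measurableEmbedding (f := M) (s := Set.Iio (0:ℝ))).1 ?_
    have hs : (Neg.neg : ℝ → ℝ) ⁻¹' (Set.Iio (0:ℝ)) = Set.Ioi 0 := by ext u; simp
    rw [hs]
    exact hMnegIoi
  have hMIic : IntegrableOn M (Set.Iic 0) :=
    (integrableOn_Iic_iff_integrableOn_Iio (f := M)).mpr hMneg
  -- reflection of integrals
  have hrefL : (∫ x in Set.Iic (0:ℝ), L x) = ∫ x in Set.Ioi (0:ℝ), L (-x) := by
    have := integral_comp_neg_Ioi (0:ℝ) L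
    rw [neg_zero] at this
    exact this.symm
  have hrefM : (∫ y in Set.Iic (0:ℝ), M y) = ∫ y in Set.Ioi (0:ℝ), M (-y) := by
    have := integral_comp_neg_Ioi (0:ℝ) M
    rw [neg_zero] at this
    exact this.symm
  calc (∫ x : ℝ, L x)
      = (∫ x in Set.Iic (0:ℝ), L x) + ∫ x in Set.Ioi (0:ℝ), L x :=
        (intervalIntegral.integral_Iic_add_Ioi hLIic hLpos).symm
    _ = (∫ x in Set.Ioi (0:ℝ), L (-x)) + ∫ x in Set.Ioi (0:ℝ), L x := by rw [hrefL]
    _ = (∫ y in Set.Ioi (0:ℝ), M (-y)) + ∫ y in Set.Ioi (0:ℝ), M y := by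
        congr 1
        · rw [MeasureTheory.setIntegral_congr_fun measurableSet_Ioi
            (fun x hx => eL2 x hx), hNeq,
            ← MeasureTheory.setIntegral_congr_fun measurableSet_Ioi
            (fun y hy => eW2 y hy)]
        · rw [MeasureTheory.setIntegral_congr_fun measurableSet_Ioi
            (fun x hx => eL1 x hx), hPeq,
            ← MeasureTheory.setIntegral_congr_fun measurableSet_Ioi
            (fun y hy => eW1 y hy)]
    _ = (∫ y in Set.Iic (0:ℝ), M y) + ∫ y in Set.Ioi (0:ℝ), M y := by rw [hrefM]
    _ = ∫ y : ℝ, M y := intervalIntegral.integral_Iic_add_Ioi hMIic hMpos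
end

section
/- Let α > -1/2 and f a smooth compactly supported function on ℝ. Then for every real λ, the Bessel-Struve transform factors through the classical Fourier transform composed with the Weyl transform: F^α_{BS}(f)(λ) = ∫_ℝ W_α(f)(x) e^{-iλx} dx. -/
open MeasureTheory Real

/-! ### Auxiliary material -/

/-- The double-integral kernel supported on the triangle `0 < y < x`. -/
noncomputable def BSH (e l : ℝ) (g : ℝ → ℂ) : ℝ × ℝ → ℂ :=
  fun p => Set.indicator {q : ℝ × ℝ | 0 < q.2 ∧ q.2 < q.1}
    (fun q => (((q.1 ^ 2 - q.2 ^ 2 : ℝ) ^ e : ℝ) : ℂ) * (q.1 : ℂ) * g q.1 *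
      Complex.exp (-Complex.I * l * q.2)) p

lemma measurable_rpow_const (e : ℝ) : Measurable fun s : ℝ => s ^ e :=
  measurable_of_continuousOn_compl_singleton 0
    (continuousOn_id.rpow_const fun _ hx => Or.inl hx)

lemma norm_exp_neg_I (l y : ℝ) : ‖Complex.exp (-Complex.I * l * y)‖ = 1 := by
  rw [Complex.norm_exp]
  simp [Complex.mul_re]

lemma xpow_mul (x : ℝ) (hx : 0 < x) (e : ℝ) : x * x ^ (2*e) = x ^ (2*e+1) := by
  nth_rewrite 1 [← Real.rpow_one x]
  rw [← Real.rpow_add hx]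
  ring_nf

lemma xpow_mul' (x : ℝ) (hx : 0 < x) (e : ℝ) : x ^ (2*e+1) * x = x ^ (2*e+2) := by
  nth_rewrite 2 [← Real.rpow_one x]
  rw [← Real.rpow_add hx]
  ring_nf

lemma tInt {e : ℝ} (he : -1 < e) :
    IntegrableOn (fun t : ℝ => (1 - t ^ 2) ^ e) (Set.Ioc 0 1) := by
  have hm : Measurable fun t : ℝ => (1 - t ^ 2 : ℝ) ^ e :=
    (measurable_rpow_const e).comp ((continuous_const.sub (continuous_pow 2)).measurable)
  have h1 : IntervalIntegrable (fun s : ℝ => s ^ e) volume 0 1 :=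
    intervalIntegral.intervalIntegrable_rpow' he
  have h2 : IntervalIntegrable (fun t : ℝ => (1 - t) ^ e) volume 0 1 := by
    simpa using (h1.comp_sub_left 1).symm
  have h2' : IntegrableOn (fun t : ℝ => (1 - t) ^ e) (Set.Ioc 0 1) :=
    (intervalIntegrable_iff_integrableOn_Ioc_of_le zero_le_one).mp h2
  refine Integrable.mono' (h2'.const_mul (2 ^ e + 1)) hm.aestronglyMeasurable ?_
  filter_upwards [ae_restrict_mem measurableSet_Ioc] with t ht
  have ht0 : 0 < t := ht.1
  have ht1 : t ≤ 1 := ht.2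
  have hb : (0:ℝ) ≤ 1 - t ^ 2 := by nlinarith
  rw [Real.norm_of_nonneg (Real.rpow_nonneg hb _)]
  have hfac : (1 - t ^ 2 : ℝ) = (1 - t) * (1 + t) := by ring
  rw [hfac, Real.mul_rpow (by linarith) (by linarith)]
  have h3 : (1 + t : ℝ) ^ e ≤ 2 ^ e + 1 := by
    rcases le_or_gt 0 e with h | h
    · have := Real.rpow_le_rpow (by linarith : (0:ℝ) ≤ 1 + t) (by linarith : (1:ℝ) + t ≤ 2) h
      linarith
    · have := Real.rpow_le_one_of_one_le_of_nonpos (by linarith : (1:ℝ) ≤ 1 + t) h.le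
      have h2pos : (0:ℝ) < 2 ^ e := Real.rpow_pos_of_pos (by norm_num) e
      linarith
  calc (1 - t) ^ e * (1 + t) ^ e ≤ (1 - t) ^ e * (2 ^ e + 1) :=
        mul_le_mul_of_nonneg_left h3 (Real.rpow_nonneg (by linarith) _)
    _ = (2 ^ e + 1) * (1 - t) ^ e := by ring

lemma tII {e : ℝ} (he : -1 < e) :
    IntervalIntegrable (fun t : ℝ => (1 - t ^ 2) ^ e) volume 0 1 := by
  rw [intervalIntegrable_iff_integrableOn_Ioc_of_le zero_le_one]
  exact tInt he

lemma rpf (e : ℝ) {x t : ℝ} (hx : 0 < x) (ht0 : 0 ≤ t) (ht1 : t ≤ 1) :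
    ((x ^ 2 - (x * t) ^ 2 : ℝ)) ^ e = x ^ (2 * e) * (1 - t ^ 2) ^ e := by
  have h1 : (x ^ 2 - (x * t) ^ 2 : ℝ) = x ^ 2 * (1 - t ^ 2) := by ring
  rw [h1, Real.mul_rpow (sq_nonneg x) (by nlinarith), ← Real.rpow_natCast x 2,
    ← Real.rpow_mul hx.le]
  norm_num

lemma subst {E : Type*} [NormedAddCommGroup E] [NormedSpace ℝ E] (e : ℝ) {x : ℝ}
    (hx : 0 < x) (φ : ℝ → E) :
    (∫ y in (0:ℝ)..x, ((x ^ 2 - y ^ 2 : ℝ) ^ e) • φ y)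
      = x ^ (2 * e + 1) • ∫ t in (0:ℝ)..1, ((1 - t ^ 2 : ℝ) ^ e) • φ (x * t) := by
  have h0 : x • (∫ t in (0:ℝ)..1, ((x ^ 2 - (x*t) ^ 2 : ℝ) ^ e) • φ (x*t))
      = ∫ y in (0:ℝ)..x, ((x ^ 2 - y ^ 2 : ℝ) ^ e) • φ y := by
    have := intervalIntegral.smul_integral_comp_mul_left
      (f := fun y => ((x ^ 2 - y ^ 2 : ℝ) ^ e) • φ y) (a := 0) (b := 1) x
    simpa using this
  rw [← h0]
  have h1 : ∫ t in (0:ℝ)..1, ((x ^ 2 - (x*t) ^ 2 : ℝ) ^ e) • φ (x*t)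
      = ∫ t in (0:ℝ)..1, (x ^ (2*e) * (1 - t ^ 2 : ℝ) ^ e) • φ (x*t) := by
    refine intervalIntegral.integral_congr fun t ht => ?_
    rw [Set.uIcc_of_le zero_le_one] at ht
    rw [rpf e hx ht.1 ht.2]
  rw [h1]
  simp_rw [mul_smul]
  rw [intervalIntegral.integral_smul, smul_smul, xpow_mul x hx e]

lemma yInt {e : ℝ} (he : -1 < e) {x : ℝ} (hx : 0 < x) :
    IntegrableOn (fun y : ℝ => (x ^ 2 - y ^ 2) ^ e) (Set.Ioo 0 x) := by
  have h1 : IntervalIntegrable (fun t : ℝ => (1 - t ^ 2) ^ e) volume 0 1 := tII he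
  have h2 := (h1.comp_mul_left (c := x⁻¹)).const_mul (x ^ (2*e))
  have hx' : x ≠ 0 := hx.ne'
  rw [show (0:ℝ) / x⁻¹ = 0 by simp, show (1:ℝ) / x⁻¹ = x by field_simp] at h2
  have h3 : IntegrableOn (fun y : ℝ => x ^ (2*e) * (1 - (x⁻¹ * y) ^ 2) ^ e) (Set.Ioo 0 x) :=
    ((intervalIntegrable_iff_integrableOn_Ioc_of_le hx.le).mp h2).mono_set
      Set.Ioo_subset_Ioc_self
  refine h3.congr_fun (fun y hy => ?_) measurableSet_Ioo
  have h4 := rpf e hx (t := x⁻¹ * y) (by have := hy.1.le; positivity) (by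
    rw [inv_mul_le_iff₀ hx]; simpa using hy.2.le)
  rw [show x * (x⁻¹ * y) = y by field_simp] at h4
  rw [h4]

lemma yVal {e : ℝ} {x : ℝ} (hx : 0 < x) :
    ∫ y in Set.Ioo 0 x, (x ^ 2 - y ^ 2) ^ e
      = x ^ (2 * e + 1) * ∫ t in Set.Ioc (0:ℝ) 1, (1 - t ^ 2) ^ e := by
  rw [← integral_Ioc_eq_integral_Ioo, ← intervalIntegral.integral_of_le hx.le]
  have := subst (E := ℝ) e hx (fun _ => (1:ℝ))
  simp only [smul_eq_mul, mul_one] at this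
  rw [this, ← intervalIntegral.integral_of_le zero_le_one]

lemma BSH_meas (e l : ℝ) {g : ℝ → ℂ} (hg : Continuous g) :
    Measurable (BSH e l g) := by
  apply Measurable.indicator
  · apply Measurable.mul
    apply Measurable.mul
    apply Measurable.mul
    · exact Complex.measurable_ofReal.comp ((measurable_rpow_const e).comp
        (((continuous_fst.pow 2).sub (continuous_snd.pow 2)).measurable))
    · exact Complex.measurable_ofReal.comp measurable_fst
    · exact hg.measurable.comp measurable_fst
    · exact (Complex.continuous_exp.comp (by continuity)).measurable
  · exact (measurableSet_lt measurable_const measurable_snd).inter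
      (measurableSet_lt measurable_snd measurable_fst)

lemma BSH_sec_eq (e l : ℝ) (g : ℝ → ℂ) (x : ℝ) :
    (fun y => BSH e l g (x, y)) = Set.indicator (Set.Ioo 0 x)
      (fun y => (((x ^ 2 - y ^ 2 : ℝ) ^ e : ℝ) : ℂ) * (x : ℂ) * g x *
        Complex.exp (-Complex.I * l * y)) := by
  funext y
  simp only [BSH, Set.indicator_apply, Set.mem_setOf_eq, Set.mem_Ioo]

lemma BSH_sec (e l : ℝ) (he : -1 < e) {g : ℝ → ℂ} (hg : Continuous g) (x : ℝ) :
    Integrable (fun y => BSH e l g (x, y)) volume := by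
  rw [BSH_sec_eq]
  rcases le_or_gt x 0 with hx | hx
  · rw [Set.Ioo_eq_empty (by linarith)]
    simp [integrable_zero]
  · rw [integrable_indicator_iff measurableSet_Ioo]
    have hmeas : AEStronglyMeasurable
        (fun y : ℝ => (((x ^ 2 - y ^ 2 : ℝ) ^ e : ℝ) : ℂ) * (x : ℂ) * g x *
          Complex.exp (-Complex.I * l * y)) (volume.restrict (Set.Ioo 0 x)) := by
      apply Measurable.aestronglyMeasurable
      apply Measurable.mul
      · exact ((Complex.measurable_ofReal.comp ((measurable_rpow_const e).comp
          ((continuous_const.sub (continuous_pow 2)).measurable))).mul_const _).mul_const _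
      · exact (Complex.continuous_exp.comp (by continuity)).measurable
    refine Integrable.mono' (((yInt he hx).mul_const (|x| * ‖g x‖))) hmeas ?_
    filter_upwards [ae_restrict_mem measurableSet_Ioo] with y hy
    have hb : (0:ℝ) ≤ x ^ 2 - y ^ 2 := by
      rcases hy with ⟨h1, h2⟩; nlinarith
    rw [norm_mul, norm_mul, norm_mul, norm_exp_neg_I, Complex.norm_real,
      Real.norm_of_nonneg (Real.rpow_nonneg hb _), Complex.norm_real]
    rw [Real.norm_eq_abs]
    ring_nf
    exact le_refl _

lemma BSH_int {e l : ℝ} (he : -1 < e) {g : ℝ → ℂ} (hg : Continuous g)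
    (hsg : HasCompactSupport g) :
    Integrable (BSH e l g) ((volume : Measure ℝ).prod (volume : Measure ℝ)) := by
  obtain ⟨R, hR⟩ := hsg.isBounded.subset_closedBall 0
  set R' : ℝ := max R 1 with hR'def
  have hR'1 : (1:ℝ) ≤ R' := le_max_right R 1
  have hR'0 : (0:ℝ) < R' := lt_of_lt_of_le one_pos hR'1
  set I : ℝ := ∫ t in Set.Ioc (0:ℝ) 1, (1 - t ^ 2) ^ e with hIdef
  have hI0 : 0 ≤ I := setIntegral_nonneg measurableSet_Ioc fun t ht =>
    Real.rpow_nonneg (by nlinarith [ht.1, ht.2]) _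
  have hmeas : AEStronglyMeasurable (BSH e l g)
      ((volume : Measure ℝ).prod (volume : Measure ℝ)) :=
    (BSH_meas e l hg).aestronglyMeasurable
  refine (integrable_prod_iff hmeas).mpr
    ⟨Filter.Eventually.of_forall (BSH_sec e l he hg), ?_⟩
  have key : ∀ x : ℝ, (∫ y, ‖BSH e l g (x, y)‖) ≤ (R' ^ (2*e+2) * I) * ‖g x‖ := by
    intro x
    have hRHS0 : 0 ≤ (R' ^ (2*e+2) * I) * ‖g x‖ :=
      mul_nonneg (mul_nonneg (Real.rpow_nonneg hR'0.le _) hI0) (norm_nonneg _)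
    rcases le_or_gt x 0 with hx | hx
    · have hz : (fun y => ‖BSH e l g (x, y)‖) = fun _ => 0 := by
        funext y
        rw [congrFun (BSH_sec_eq e l g x) y, Set.Ioo_eq_empty (by intro h; linarith)]
        simp
      rw [hz]
      simpa using hRHS0
    · by_cases hgx : g x = 0
      · have hz : (fun y => ‖BSH e l g (x, y)‖) = fun _ => 0 := by
          funext y
          rw [congrFun (BSH_sec_eq e l g x) y]
          simp [hgx]
        rw [hz]
        simpa using hRHS0
      · have hxR : x ≤ R' := by
          have hx1 : x ∈ tsupport g := subset_tsupport g (by simpa [Function.mem_support] using hgx)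
          have := hR hx1
          rw [Metric.mem_closedBall, Real.dist_eq, sub_zero] at this
          calc x ≤ |x| := le_abs_self x
            _ ≤ R := this
            _ ≤ R' := le_max_left R 1
        have hsec : (fun y => ‖BSH e l g (x, y)‖) = Set.indicator (Set.Ioo 0 x)
            (fun y => (x ^ 2 - y ^ 2) ^ e * (x * ‖g x‖)) := by
          funext y
          rw [congrFun (BSH_sec_eq e l g x) y]
          by_cases hy : y ∈ Set.Ioo 0 x
          · rw [Set.indicator_of_mem hy, Set.indicator_of_mem hy]
            have hb : (0:ℝ) ≤ x ^ 2 - y ^ 2 := by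
              rcases hy with ⟨h1, h2⟩; nlinarith
            rw [norm_mul, norm_mul, norm_mul, norm_exp_neg_I, Complex.norm_real,
              Real.norm_of_nonneg (Real.rpow_nonneg hb _), Complex.norm_real,
              Real.norm_eq_abs, abs_of_pos hx]
            ring
          · rw [Set.indicator_of_notMem hy, Set.indicator_of_notMem hy, norm_zero]
        rw [hsec, integral_indicator measurableSet_Ioo, integral_mul_const, yVal hx]
        have h1 : x ^ (2*e+1) * x = x ^ (2*e+2) := xpow_mul' x hx e
        have h2 : x ^ (2*e+2) ≤ R' ^ (2*e+2) :=
          Real.rpow_le_rpow hx.le hxR (by linarith)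
        have h3 : (0:ℝ) ≤ x ^ (2*e+2) := Real.rpow_nonneg hx.le _
        calc x ^ (2*e+1) * I * (x * ‖g x‖) = (x ^ (2*e+1) * x) * I * ‖g x‖ := by ring
          _ = x ^ (2*e+2) * I * ‖g x‖ := by rw [h1]
          _ ≤ R' ^ (2*e+2) * I * ‖g x‖ := by
              have := mul_le_mul_of_nonneg_right (mul_le_mul_of_nonneg_right h2 hI0)
                (norm_nonneg (g x))
              linarith
  refine Integrable.mono' (((hg.norm).integrable_of_hasCompactSupport hsg.norm).const_mul
    (R' ^ (2*e+2) * I)) hmeas.norm.integral_prod_right' ?_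
  filter_upwards with x
  rw [Real.norm_of_nonneg (integral_nonneg fun y => norm_nonneg _)]
  exact key x

lemma marg_x0 (e l : ℝ) (g : ℝ → ℂ) {x : ℝ} (hx : x ≤ 0) :
    (∫ y, BSH e l g (x, y)) = 0 := by
  have hz : (fun y => BSH e l g (x, y)) = fun _ => 0 := by
    rw [BSH_sec_eq, Set.Ioo_eq_empty (by intro h; linarith)]
    simp
  rw [hz, integral_zero]

lemma marg_x (e l : ℝ) (g : ℝ → ℂ) {x : ℝ} (hx : 0 < x) :
    (∫ y, BSH e l g (x, y))
      = g x * (∫ t in (0:ℝ)..1, (((1 - t ^ 2 : ℝ) ^ e : ℝ) : ℂ) *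
          Complex.exp (-Complex.I * l * x * t)) * ((x ^ (2 * e + 2) : ℝ) : ℂ) := by
  rw [BSH_sec_eq, integral_indicator measurableSet_Ioo,
    ← integral_Ioc_eq_integral_Ioo, ← intervalIntegral.integral_of_le hx.le]
  have h1 : ∀ y : ℝ, (((x ^ 2 - y ^ 2 : ℝ) ^ e : ℝ) : ℂ) * (x : ℂ) * g x *
      Complex.exp (-Complex.I * l * y)
      = ((x ^ 2 - y ^ 2 : ℝ) ^ e) • ((x : ℂ) * g x * Complex.exp (-Complex.I * l * y)) := by
    intro y
    rw [Complex.real_smul]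
    ring
  simp_rw [h1]
  rw [subst e hx (fun y => (x : ℂ) * g x * Complex.exp (-Complex.I * l * y))]
  have h3 : (∫ t in (0:ℝ)..1, ((1 - t ^ 2 : ℝ) ^ e) •
        ((x : ℂ) * g x * Complex.exp (-Complex.I * l * ((x * t : ℝ) : ℂ))))
      = ((x:ℂ) * g x) * ∫ t in (0:ℝ)..1, (((1 - t ^ 2 : ℝ) ^ e : ℝ):ℂ) *
          Complex.exp (-Complex.I * l * x * t) := by
    rw [← intervalIntegral.integral_const_mul]
    refine intervalIntegral.integral_congr fun t _ => ?_
    rw [Complex.real_smul]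
    push_cast
    ring
  rw [h3, Complex.real_smul]
  rw [show ((x ^ (2*e+1) : ℝ) : ℂ) * ((x:ℂ) * g x * ∫ t in (0:ℝ)..1,
      (((1 - t ^ 2 : ℝ) ^ e : ℝ):ℂ) * Complex.exp (-Complex.I * l * x * t))
    = (((x ^ (2*e+1) : ℝ) : ℂ) * (x:ℂ)) * g x * ∫ t in (0:ℝ)..1,
      (((1 - t ^ 2 : ℝ) ^ e : ℝ):ℂ) * Complex.exp (-Complex.I * l * x * t) from by ring]
  rw [show (((x ^ (2*e+1) : ℝ) : ℂ) * (x:ℂ)) = ((x ^ (2*e+2) : ℝ) : ℂ) from by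
    rw [← Complex.ofReal_mul, xpow_mul' x hx e]]
  ring

lemma marg_y0 (e l : ℝ) (g : ℝ → ℂ) {y : ℝ} (hy : y ≤ 0) :
    (∫ x, BSH e l g (x, y)) = 0 := by
  have hz : (fun x => BSH e l g (x, y)) = fun _ => 0 := by
    funext x
    exact Set.indicator_of_notMem (fun h => absurd h.1 (by linarith)) _
  rw [hz, integral_zero]

lemma marg_y (e l : ℝ) (g : ℝ → ℂ) {y : ℝ} (hy : 0 < y) :
    (∫ x, BSH e l g (x, y))
      = (∫ x in Set.Ioi y, (((x ^ 2 - y ^ 2 : ℝ) ^ e : ℝ) : ℂ) * (x : ℂ) * g x) *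
          Complex.exp (-Complex.I * l * y) := by
  have hz : (fun x => BSH e l g (x, y)) = Set.indicator (Set.Ioi y)
      (fun x => ((((x ^ 2 - y ^ 2 : ℝ) ^ e : ℝ) : ℂ) * (x : ℂ) * g x) *
        Complex.exp (-Complex.I * l * y)) := by
    funext x
    simp only [BSH, Set.indicator_apply, Set.mem_setOf_eq, Set.mem_Ioi]
    by_cases h : y < x
    · simp [h, hy]
    · simp [h, hy]
  rw [hz, integral_indicator measurableSet_Ioi, integral_mul_const]

theorem FBS_eq_fourier_comp_Weyl (a : ℝ) (ha : -1/2 < a) (f : ℝ → ℂ)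
    (hf : ContDiff ℝ (⊤ : ℕ∞) f) (hs : HasCompactSupport f) (l : ℝ) :
    (∫ x : ℝ, f x * BSkernel a (-Complex.I * l) x * ((|x| ^ (2*a+1) : ℝ) : ℂ)) =
      ∫ x : ℝ, Weyl a f x * Complex.exp (-Complex.I * l * x) := by
  have he : (-1:ℝ) < a - 1/2 := by linarith
  have hfc : Continuous f := hf.continuous
  set g₂ : ℝ → ℂ := fun x => f (-x) with hg₂def
  have hg₂c : Continuous g₂ := hfc.comp continuous_neg
  have hs₂ : HasCompactSupport g₂ := hs.comp_homeomorph (Homeomorph.neg ℝ)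
  have hint₁ : Integrable (BSH (a - 1/2) l f)
      ((volume : Measure ℝ).prod (volume : Measure ℝ)) := BSH_int he hfc hs
  have hint₂ : Integrable (BSH (a - 1/2) (-l) g₂)
      ((volume : Measure ℝ).prod (volume : Measure ℝ)) := BSH_int he hg₂c hs₂
  have h0 : ∀ᵐ x : ℝ, x ≠ 0 := by
    have hset : {x : ℝ | ¬ x ≠ 0} = {0} := by ext x; simp
    rw [ae_iff, hset]
    exact measure_singleton 0
  have hexp2 : (2 * (a - 1/2) + 2 : ℝ) = 2*a+1 := by ring
  -- Left-hand side
  have hLeq : ∀ᵐ x : ℝ, f x * BSkernel a (-Complex.I * l) x * ((|x| ^ (2*a+1) : ℝ) : ℂ)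
      = (BSconst a : ℂ) * ((∫ y, BSH (a - 1/2) l f (x, y))
          + ∫ y, BSH (a - 1/2) (-l) g₂ (-x, y)) := by
    filter_upwards [h0] with x hx0
    simp only [BSkernel]
    rcases hx0.lt_or_gt with hx | hx
    · rw [marg_x0 (a - 1/2) l f hx.le,
        marg_x (a - 1/2) (-l) g₂ (by linarith : (0:ℝ) < -x)]
      have hker : (∫ t in (0:ℝ)..1, (((1 - t ^ 2 : ℝ) ^ (a - 1/2) : ℝ) : ℂ) *
            Complex.exp (-Complex.I * ((-l : ℝ) : ℂ) * ((-x : ℝ) : ℂ) * t))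
          = ∫ t in (0:ℝ)..1, (((1 - t ^ 2 : ℝ) ^ (a - 1/2) : ℝ) : ℂ) *
            Complex.exp (-Complex.I * (l : ℂ) * (x : ℂ) * t) := by
        refine intervalIntegral.integral_congr fun t _ => ?_
        rw [show (-Complex.I * ((-l : ℝ) : ℂ) * ((-x : ℝ) : ℂ) * (t : ℂ))
          = -Complex.I * (l : ℂ) * (x : ℂ) * t from by push_cast; ring]
      rw [hker]
      rw [show g₂ (-x) = f x from by rw [hg₂def]; simp]
      rw [hexp2, abs_of_neg hx]
      ring
    · rw [marg_x (a - 1/2) l f hx, marg_x0 (a - 1/2) (-l) g₂ (by linarith : -x ≤ 0)]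
      rw [hexp2, abs_of_pos hx]
      ring
  -- Right-hand side
  have hReq : ∀ᵐ x : ℝ, Weyl a f x * Complex.exp (-Complex.I * l * x)
      = (BSconst a : ℂ) * ((∫ y, BSH (a - 1/2) l f (y, x))
          + ∫ y, BSH (a - 1/2) (-l) g₂ (y, -x)) := by
    filter_upwards [h0] with x hx0
    simp only [Weyl]
    rcases hx0.lt_or_gt with hx | hx
    · rw [marg_y0 (a - 1/2) l f hx.le,
        marg_y (a - 1/2) (-l) g₂ (by linarith : (0:ℝ) < -x)]
      rw [abs_of_neg hx, Real.sign_of_neg hx]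
      have hin : (∫ z in Set.Ioi (-x), (((z ^ 2 - (-x) ^ 2 : ℝ) ^ (a - 1/2) : ℝ) : ℂ) *
            (z : ℂ) * g₂ z)
          = ∫ z in Set.Ioi (-x), (((z ^ 2 - x ^ 2 : ℝ) ^ (a - 1/2) : ℝ) : ℂ) *
            (z : ℂ) * f ((-1) * z) := by
        refine setIntegral_congr_fun measurableSet_Ioi fun z _ => ?_
        rw [hg₂def]
        simp [neg_sq]
      rw [hin]
      rw [show Complex.exp (-Complex.I * ((-l : ℝ) : ℂ) * ((-x : ℝ) : ℂ))
        = Complex.exp (-Complex.I * (l : ℂ) * (x : ℂ)) from by push_cast; ring_nf]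
      ring
    · rw [marg_y (a - 1/2) l f hx, marg_y0 (a - 1/2) (-l) g₂ (by linarith : -x ≤ 0)]
      rw [abs_of_pos hx, Real.sign_of_pos hx]
      simp only [one_mul]
      ring
  rw [integral_congr_ae hLeq, integral_congr_ae hReq]
  rw [integral_const_mul, integral_const_mul]
  have hn₁i : Integrable (fun x => ∫ y, BSH (a - 1/2) l f (x, y)) volume :=
    hint₁.integral_prod_left
  have hn₂i : Integrable (fun x => ∫ y, BSH (a - 1/2) (-l) g₂ (-x, y)) volume :=
    hint₂.integral_prod_left.comp_neg
  have hm₁i : Integrable (fun x => ∫ y, BSH (a - 1/2) l f (y, x)) volume :=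
    hint₁.integral_prod_right
  have hm₂i : Integrable (fun x => ∫ y, BSH (a - 1/2) (-l) g₂ (y, -x)) volume :=
    hint₂.integral_prod_right.comp_neg
  rw [integral_add hn₁i hn₂i, integral_add hm₁i hm₂i]
  have hswap₁ : (∫ x, ∫ y, BSH (a - 1/2) l f (x, y))
      = ∫ y, ∫ x, BSH (a - 1/2) l f (x, y) :=
    integral_integral_swap (f := fun x y => BSH (a - 1/2) l f (x, y)) hint₁
  have hswap₂ : (∫ x, ∫ y, BSH (a - 1/2) (-l) g₂ (x, y))
      = ∫ y, ∫ x, BSH (a - 1/2) (-l) g₂ (x, y) :=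
    integral_integral_swap (f := fun x y => BSH (a - 1/2) (-l) g₂ (x, y)) hint₂
  have hneg₁ : (∫ x : ℝ, ∫ y, BSH (a - 1/2) (-l) g₂ (-x, y))
      = ∫ x : ℝ, ∫ y, BSH (a - 1/2) (-l) g₂ (x, y) :=
    integral_neg_eq_self (fun x => ∫ y, BSH (a - 1/2) (-l) g₂ (x, y)) volume
  have hneg₂ : (∫ x : ℝ, ∫ y, BSH (a - 1/2) (-l) g₂ (y, -x))
      = ∫ x : ℝ, ∫ y, BSH (a - 1/2) (-l) g₂ (y, x) :=
    integral_neg_eq_self (fun x => ∫ y, BSH (a - 1/2) (-l) g₂ (y, x)) volume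
  rw [hneg₁, hneg₂, hswap₁, hswap₂]
end

section
/- Let f be a C¹ function on ℝ∖{0} with compact support, such that f and x·f'(x) extend to bounded measurable functions near 0 (i.e. lim_{y→0⁺} f(y), lim_{y→0⁻} f(y), lim_{y→0⁺} y f'(y), lim_{y→0⁻} y f'(y) all exist). Then the Fourier transform F(f)(z) = ∫_ℝ f(x) e^{-ixz} dx extends to an entire function of z ∈ ℂ, and for all z ∈ ℂ, iz·F(f)(z) = ∫_ℝ f'(x)(e^{-ixz} − 1) dx. -/
open MeasureTheory Real Filter Set Topology Complex

/-!
The function `G x = f x * (exp (-ixz) - 1)` is continuous on all of `ℝ`: away from `0` because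
`f` is, and at `0` because `f` is bounded and the second factor vanishes there. Off `0` its
derivative is `f' x * (exp (-ixz) - 1) - iz f x exp (-ixz)`, which is integrable because
`|exp (-ixz) - 1| = O(|x|)` and `x f'(x)` is bounded. As `G` has compact support, the fundamental
theorem of calculus on each side of `0` shows that this derivative has integral zero, which is the
formula. Differentiability in `z` is differentiation under the integral sign, the support being
compact.
-/

theorem HasCompactSupport.exists_norm_le_of_tendsto_nhdsGT_of_tendsto_nhdsLT {E : Type*}
    [NormedAddCommGroup E] {g : ℝ → E}
    (hK : HasCompactSupport g) (hg : ContinuousOn g {0}ᶜ)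
    (hpos : ∃ L, Tendsto g (𝓝[>] 0) (𝓝 L)) (hneg : ∃ L, Tendsto g (𝓝[<] 0) (𝓝 L)) :
    ∃ C, ∀ x, ‖g x‖ ≤ C := by
  obtain ⟨L₁, hL₁⟩ := hpos
  obtain ⟨L₂, hL₂⟩ := hneg
  set C₀ := ‖L₁‖ + ‖L₂‖ + 1
  have hnear : ∀ᶠ x in 𝓝[≠] 0, ‖g x‖ ≤ C₀ := by
    rw [← nhdsLT_sup_nhdsGT, eventually_sup]
    exact ⟨hL₂.norm.eventually (eventually_le_nhds (by linarith [norm_nonneg L₁])),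
      hL₁.norm.eventually (eventually_le_nhds (by linarith [norm_nonneg L₂]))⟩
  obtain ⟨U, hU, hUo, hU0⟩ := eventually_nhds_iff.1 (eventually_nhdsWithin_iff.1 hnear)
  obtain ⟨C₁, hC₁⟩ := (hK.isCompact.diff hUo).exists_bound_of_continuousOn
    (hg.mono fun x hx (h0 : x = 0) => hx.2 (h0 ▸ hU0))
  refine ⟨max C₀ (max C₁ ‖g 0‖), fun x => ?_⟩
  by_cases hx0 : x = 0
  · exact hx0 ▸ le_max_of_le_right (le_max_right _ _)
  by_cases hxU : x ∈ U
  · exact le_max_of_le_left (hU x hxU hx0)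
  by_cases hxK : x ∈ tsupport g
  · exact le_max_of_le_right (le_max_of_le_left (hC₁ x ⟨hxK, hxU⟩))
  · rw [image_eq_zero_of_notMem_tsupport hxK, norm_zero]
    exact le_max_of_le_right (le_max_of_le_right (norm_nonneg _))

theorem HasCompactSupport.integrable_of_bound {X E : Type*} [TopologicalSpace X]
    [MeasurableSpace X] {μ : Measure X} [IsFiniteMeasureOnCompacts μ] [NormedAddCommGroup E]
    {g : X → E} (hK : HasCompactSupport g) (hm : AEStronglyMeasurable g μ) {C : ℝ}
    (hC : ∀ x, ‖g x‖ ≤ C) : Integrable g μ :=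
  (Measure.integrableOn_of_bounded hK.isCompact.measure_lt_top.ne hm
    (ae_of_all _ hC)).integrable_of_forall_notMem_eq_zero
    fun _ hx => image_eq_zero_of_notMem_tsupport hx

theorem MeasureTheory.Integrable.mul_continuous_of_hasCompactSupport {X R : Type*}
    [TopologicalSpace X] [T2Space X] [MeasurableSpace X] [OpensMeasurableSpace X] {μ : Measure X}
    [NormedRing R] [SecondCountableTopologyEither X R] {g h : X → R} (hg : Integrable g μ)
    (hK : HasCompactSupport g) (hh : Continuous h) : Integrable (fun x => g x * h x) μ :=
  (hg.integrableOn.mul_continuousOn hh.continuousOn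
    hK.isCompact).integrable_of_forall_notMem_eq_zero
    fun _ hx => by simp [image_eq_zero_of_notMem_tsupport hx]

theorem integral_eq_sub_of_hasDerivAt_of_ne {E : Type*} [NormedAddCommGroup E] [NormedSpace ℝ E]
    [CompleteSpace E] {G G' : ℝ → E} {a : ℝ} {m n : E} (hcont : ContinuousAt G a)
    (hderiv : ∀ x ≠ a, HasDerivAt G (G' x) x) (hint : Integrable G')
    (hbot : Tendsto G atBot (𝓝 m)) (htop : Tendsto G atTop (𝓝 n)) :
    ∫ x, G' x = n - m := by
  rw [← intervalIntegral.integral_Iic_add_Ioi (b := a) hint.integrableOn hint.integrableOn,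
    integral_Iic_of_hasDerivAt_of_tendsto hcont.continuousWithinAt
      (fun x hx => hderiv x hx.ne) hint.integrableOn hbot,
    integral_Ioi_of_hasDerivAt_of_tendsto hcont.continuousWithinAt
      (fun x hx => hderiv x hx.ne') hint.integrableOn htop]
  abel

theorem Complex.norm_exp_sub_one_le_norm_mul_exp (w : ℂ) :
    ‖cexp w - 1‖ ≤ ‖w‖ * Real.exp ‖w‖ := by
  simpa using norm_exp_sub_sum_le_norm_mul_exp w 1

theorem Complex.norm_neg_I_mul_ofReal_mul (x : ℝ) (z : ℂ) :
    ‖-I * x * z‖ = |x| * ‖z‖ := by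
  simp [norm_real]

theorem hasDerivAt_cexp_neg_I_mul_ofReal_mul (x : ℝ) (z : ℂ) :
    HasDerivAt (fun y : ℝ => cexp (-I * y * z)) (cexp (-I * x * z) * (-I * z)) x := by
  simpa using (((hasDerivAt_id (x : ℂ)).const_mul (-I)).mul_const z).cexp.comp_ofReal

theorem differentiable_integral_mul_cexp_neg_I_mul {g : ℝ → ℂ} (hg : Integrable g)
    (hK : HasCompactSupport g) :
    Differentiable ℂ (fun z : ℂ => ∫ x : ℝ, g x * cexp (-I * x * z)) := by
  obtain ⟨R, hR0, hR⟩ := hK.exists_pos_le_norm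
  have hint : ∀ z : ℂ, Integrable (fun x : ℝ => g x * cexp (-I * x * z)) := fun z =>
    hg.mul_continuous_of_hasCompactSupport hK (by fun_prop)
  intro z₀
  refine (hasDerivAt_integral_of_dominated_loc_of_deriv_le (Metric.ball_mem_nhds z₀ one_pos)
    (F' := fun z x => g x * (cexp (-I * x * z) * (-I * x)))
    (bound := fun x => ‖g x‖ * (Real.exp (R * (‖z₀‖ + 1)) * R))
    (.of_forall fun z => (hint z).aestronglyMeasurable) (hint z₀)
    (hg.mul_continuous_of_hasCompactSupport hK (by fun_prop)).aestronglyMeasurable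
    (ae_of_all _ fun x z hz => ?_) (hg.norm.mul_const _)
    (ae_of_all _ fun x z _ => ?_)).2.differentiableAt
  · rcases le_or_gt R ‖x‖ with hx | hx
    · simp [hR x hx]
    have hxR : |x| ≤ R := hx.le
    have hz : ‖z‖ ≤ ‖z₀‖ + 1 := (norm_lt_of_mem_ball hz).le
    rw [norm_mul, norm_mul, show ‖-I * (x : ℂ)‖ = |x| by simp [norm_real]]
    gcongr
    refine (norm_exp_le_exp_norm _).trans (Real.exp_le_exp.2 ?_)
    rw [norm_neg_I_mul_ofReal_mul]
    gcongr
  · exact (((hasDerivAt_id z).const_mul (-I * x)).cexp.const_mul (g x)).congr_deriv (by simp)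

theorem integrable_mul_cexp_neg_I_mul_sub_one {g : ℝ → ℂ} (hm : AEStronglyMeasurable g)
    (hK : HasCompactSupport g) {C : ℝ} (hC : ∀ x : ℝ, ‖(x : ℂ) * g x‖ ≤ C) (z : ℂ) :
    Integrable (fun x : ℝ => g x * (cexp (-I * x * z) - 1)) := by
  obtain ⟨R, -, hR⟩ := hK.exists_pos_le_norm
  have hC0 : 0 ≤ C := by simpa using hC 0
  refine HasCompactSupport.integrable_of_bound
    (hK.mul_right (f' := fun x : ℝ => cexp (-I * x * z) - 1))
    (hm.mul (by fun_prop : Continuous _).aestronglyMeasurable)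
    (C := C * ‖z‖ * Real.exp (R * ‖z‖)) fun x => ?_
  rcases le_or_gt R ‖x‖ with hx | hx
  · simp only [hR x hx, zero_mul, norm_zero]
    positivity
  have hxR : |x| ≤ R := hx.le
  calc ‖g x * (cexp (-I * x * z) - 1)‖
      ≤ ‖g x‖ * (|x| * ‖z‖ * Real.exp (|x| * ‖z‖)) := by
        rw [norm_mul, ← norm_neg_I_mul_ofReal_mul]
        gcongr
        exact norm_exp_sub_one_le_norm_mul_exp _
    _ = ‖(x : ℂ) * g x‖ * ‖z‖ * Real.exp (|x| * ‖z‖) := by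
        rw [norm_mul, norm_real, Real.norm_eq_abs]
        ring
    _ ≤ C * ‖z‖ * Real.exp (R * ‖z‖) := by gcongr; exact hC x

theorem fourier_entire_and_iz_formula (f : ℝ → ℂ)
    (hf : ContDiffOn ℝ 1 f {(0:ℝ)}ᶜ) (hs : HasCompactSupport f)
    (h1 : ∃ L : ℂ, Tendsto f (nhdsWithin 0 (Set.Ioi 0)) (nhds L))
    (h2 : ∃ L : ℂ, Tendsto f (nhdsWithin 0 (Set.Iio 0)) (nhds L))
    (h3 : ∃ L : ℂ, Tendsto (fun y : ℝ => (y:ℂ) * deriv f y) (nhdsWithin 0 (Set.Ioi 0)) (nhds L))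
    (h4 : ∃ L : ℂ, Tendsto (fun y : ℝ => (y:ℂ) * deriv f y) (nhdsWithin 0 (Set.Iio 0)) (nhds L)) :
    Differentiable ℂ (fun z : ℂ => ∫ x : ℝ, f x * Complex.exp (-Complex.I * x * z)) ∧
    ∀ z : ℂ, Complex.I * z * (∫ x : ℝ, f x * Complex.exp (-Complex.I * x * z)) =
      ∫ x : ℝ, deriv f x * (Complex.exp (-Complex.I * x * z) - 1) := by
  have hd : ContinuousOn (deriv f) {0}ᶜ :=
    hf.continuousOn_deriv_of_isOpen isOpen_compl_singleton le_rfl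
  obtain ⟨Cf, hCf⟩ :=
    hs.exists_norm_le_of_tendsto_nhdsGT_of_tendsto_nhdsLT hf.continuousOn h1 h2
  obtain ⟨Cd, hCd⟩ := hs.deriv.mul_left.exists_norm_le_of_tendsto_nhdsGT_of_tendsto_nhdsLT
    (continuous_ofReal.continuousOn.mul hd) h3 h4
  have hfm : AEStronglyMeasurable f := by
    simpa using hf.continuousOn.aestronglyMeasurable (μ := volume)
      (measurableSet_singleton (0 : ℝ)).compl
  have hfi : Integrable f := hs.integrable_of_bound hfm hCf
  refine ⟨differentiable_integral_mul_cexp_neg_I_mul hfi hs, fun z => ?_⟩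
  have he : Continuous fun x : ℝ => cexp (-I * x * z) := by fun_prop
  have hD := integrable_mul_cexp_neg_I_mul_sub_one (measurable_deriv f).aestronglyMeasurable
    hs.deriv hCd z
  have hF := (hfi.mul_continuous_of_hasCompactSupport hs he).mul_const (-(I * z))
  set G : ℝ → ℂ := fun x => f x * (cexp (-I * x * z) - 1)
  have hG : ∀ x ≠ 0, HasDerivAt G
      (deriv f x * (cexp (-I * x * z) - 1) + f x * cexp (-I * x * z) * (-(I * z))) x := by
    intro x hx
    have hfx := ((hf.contDiffAt (isOpen_compl_singleton.mem_nhds hx)).differentiableAt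
      one_ne_zero).hasDerivAt
    exact (hfx.mul ((hasDerivAt_cexp_neg_I_mul_ofReal_mul x z).sub_const 1)).congr_deriv (by ring)
  have hG0 : ContinuousAt G 0 := by
    have he1 : Tendsto (fun y : ℝ => cexp (-I * y * z) - 1) (𝓝 0) (𝓝 0) := by
      simpa using (he.tendsto 0).sub_const 1
    simpa [ContinuousAt, G] using
      isBoundedUnder_le_mul_tendsto_zero (isBoundedUnder_of ⟨Cf, hCf⟩) he1
  have hsum := integral_eq_sub_of_hasDerivAt_of_ne hG0 hG (hD.add hF)
    (hs.mul_right.is_zero_at_infty.mono_left atBot_le_cocompact)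
    (hs.mul_right.is_zero_at_infty.mono_left atTop_le_cocompact)
  rw [integral_add hD hF, integral_mul_const] at hsum
  linear_combination -hsum
end

section
/- Let a > 0 and f a smooth function on ℝ supported in [-a,a], with α > -1/2. Then the Bessel-Struve transform F^α_{BS}(f)(λ) = ∫_ℝ f(x) S^α_{-iλ}(x) |x|^{2α+1} dx extends to an entire function on ℂ, and there is a constant C > 0 such that |F^α_{BS}(f)(z)| ≤ C e^{a|z|} for all z ∈ ℂ. -/
open MeasureTheory Real

/-- Bessel-Struve kernel, extended to complex spectral parameter. -/
noncomputable def BSkernelC (a : ℝ) (l z : ℂ) : ℂ :=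
  (BSconst a : ℂ) *
    ∫ t in (0:ℝ)..1, ((((1 - t^2 : ℝ) ^ (a - 1/2) : ℝ) : ℂ)) * Complex.exp (l * z * t)

/-- Auxiliary integrand as a function on the product space. -/
noncomputable def BSPhi (a : ℝ) (f : ℝ → ℂ) (z : ℂ) (p : ℝ × ℝ) : ℂ :=
  f p.1 * ((|p.1| ^ (2*a+1) : ℝ) : ℂ) * (((1 - p.2^2 : ℝ) ^ (a - 1/2) : ℝ) : ℂ) *
    Complex.exp (-Complex.I * z * p.1 * p.2)

/-- z-derivative of `BSPhi`. -/
noncomputable def BSPhi' (a : ℝ) (f : ℝ → ℂ) (z : ℂ) (p : ℝ × ℝ) : ℂ :=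
  BSPhi a f z p * (-Complex.I * p.1 * p.2)

lemma BS_g_integrable {a : ℝ} (ha : -1/2 < a) :
    IntegrableOn (fun t : ℝ => (1 - t ^ 2) ^ (a - 1/2)) (Set.Ioc (0:ℝ) 1) := by
  have hq : (-1:ℝ) < a - 1/2 := by linarith
  have h1 : IntervalIntegrable (fun x : ℝ => x ^ (a - 1/2)) volume 0 1 :=
    intervalIntegral.intervalIntegrable_rpow' hq
  have h2 := (h1.comp_sub_left 1).symm
  norm_num at h2
  have h3 : IntegrableOn (fun x : ℝ => (1 - x) ^ (a - 1/2)) (Set.Ioc (0:ℝ) 1) := by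
    rwa [intervalIntegrable_iff_integrableOn_Ioc_of_le zero_le_one] at h2
  set M : ℝ := max 1 (2 ^ (a - 1/2)) with hM
  have hM0 : (0:ℝ) ≤ M := le_trans zero_le_one (le_max_left _ _)
  have h4 : IntegrableOn (fun x : ℝ => M * (1 - x) ^ (a - 1/2)) (Set.Ioc (0:ℝ) 1) :=
    h3.const_mul M
  refine Integrable.mono h4 ?_ ?_
  · exact (Measurable.aestronglyMeasurable (by fun_prop))
  · filter_upwards [ae_restrict_mem measurableSet_Ioc] with t ht
    have h0t : (0:ℝ) ≤ 1 - t := by linarith [ht.2]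
    have h1t : (0:ℝ) ≤ 1 + t := by linarith [ht.1.le]
    have hfac : (1 - t ^ 2) = (1 - t) * (1 + t) := by ring
    have hnn : (0:ℝ) ≤ (1 - t) ^ (a - 1/2) := Real.rpow_nonneg h0t _
    have hnn2 : (0:ℝ) ≤ (1 - t ^ 2) ^ (a - 1/2) :=
      Real.rpow_nonneg (by nlinarith [ht.1.le, ht.2] : (0:ℝ) ≤ 1 - t ^ 2) _
    have hfactor : (1 + t) ^ (a - 1/2) ≤ M := by
      rcases le_or_gt 0 (a - 1/2) with hq0 | hq0
      · refine le_trans ?_ (le_max_right _ _)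
        exact Real.rpow_le_rpow h1t (by linarith [ht.2]) hq0
      · refine le_trans ?_ (le_max_left _ _)
        exact Real.rpow_le_one_of_one_le_of_nonpos (by linarith [ht.1.le]) hq0.le
    have key : (1 - t ^ 2) ^ (a - 1/2) ≤ M * (1 - t) ^ (a - 1/2) := by
      rw [hfac, Real.mul_rpow h0t h1t]
      calc (1 - t) ^ (a - 1/2) * (1 + t) ^ (a - 1/2)
          ≤ (1 - t) ^ (a - 1/2) * M := mul_le_mul_of_nonneg_left hfactor hnn
        _ = M * (1 - t) ^ (a - 1/2) := mul_comm _ _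
    rw [Real.norm_eq_abs, Real.norm_eq_abs, abs_of_nonneg hnn2,
      abs_of_nonneg (mul_nonneg hM0 hnn)]
    exact key

lemma BSPhi_meas (a : ℝ) (f : ℝ → ℂ) (hf : Continuous f) (z : ℂ) :
    Measurable (fun p : ℝ × ℝ => BSPhi a f z p) := by
  have hfm : Measurable f := hf.measurable
  unfold BSPhi
  fun_prop

lemma BSPhi'_meas (a : ℝ) (f : ℝ → ℂ) (hf : Continuous f) (z : ℂ) :
    Measurable (fun p : ℝ × ℝ => BSPhi' a f z p) := by
  unfold BSPhi'
  exact (BSPhi_meas a f hf z).mul (by fun_prop)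

lemma BSPhi_hasDerivAt (a : ℝ) (f : ℝ → ℂ) (z : ℂ) (p : ℝ × ℝ) :
    HasDerivAt (fun z => BSPhi a f z p) (BSPhi' a f z p) z := by
  have h1 : HasDerivAt (fun z : ℂ => -Complex.I * z * (p.1 : ℂ) * (p.2 : ℂ))
      (-Complex.I * (p.1 : ℂ) * (p.2 : ℂ)) z := by
    simpa using
      (((hasDerivAt_id z).const_mul (-Complex.I)).mul_const ((p.1 : ℂ))).mul_const ((p.2 : ℂ))
  have h2 := h1.cexp
  have h3 := h2.const_mul
    (f p.1 * ((|p.1| ^ (2*a+1) : ℝ) : ℂ) * (((1 - p.2^2 : ℝ) ^ (a - 1/2) : ℝ) : ℂ))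
  refine h3.congr_deriv ?_
  simp only [BSPhi', BSPhi]
  ring

theorem FBS_entire_exponential_type (a r : ℝ) (ha : -1/2 < a) (hr : 0 < r)
    (f : ℝ → ℂ) (hf : ContDiff ℝ (⊤ : ℕ∞) f) (hsupp : tsupport f ⊆ Set.Icc (-r) r) :
    Differentiable ℂ
      (fun z : ℂ => ∫ x : ℝ, f x * BSkernelC a (-Complex.I * z) x * ((|x| ^ (2*a+1) : ℝ) : ℂ)) ∧
    ∃ C > 0, ∀ z : ℂ,
      ‖∫ x : ℝ, f x * BSkernelC a (-Complex.I * z) x * ((|x| ^ (2*a+1) : ℝ) : ℂ)‖ ≤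
        C * Real.exp (r * ‖z‖) := by
  have hfc : Continuous f := hf.continuous
  -- bound on f
  obtain ⟨B, hB⟩ : ∃ B, ∀ x, ‖f x‖ ≤ B := by
    have hcs : HasCompactSupport f :=
      IsCompact.of_isClosed_subset isCompact_Icc (isClosed_tsupport f) hsupp
    exact hcs.exists_bound_of_continuous hfc
  have hB0 : (0:ℝ) ≤ B := le_trans (norm_nonneg _) (hB 0)
  -- bound on the weight
  set W : ℝ := max 1 (r ^ (2*a+1)) with hWdef
  have hW1 : (1:ℝ) ≤ W := le_max_left _ _
  have hW0 : (0:ℝ) ≤ W := le_trans zero_le_one hW1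
  have hW : ∀ x ∈ Set.Icc (-r) r, |x| ^ (2*a+1) ≤ W := by
    intro x hx
    have hxr : |x| ≤ r := abs_le.mpr ⟨hx.1, hx.2⟩
    rcases le_total |x| 1 with h | h
    · exact le_trans (Real.rpow_le_one (abs_nonneg x) h (by linarith)) (le_max_left _ _)
    · exact le_trans (Real.rpow_le_rpow (abs_nonneg x) hxr (by linarith)) (le_max_right _ _)
  -- the product measure
  set μ : Measure (ℝ × ℝ) :=
    (volume.restrict (Set.Icc (-r) r)).prod (volume.restrict (Set.Ioc (0:ℝ) 1)) with hμdef
  haveI hfin : IsFiniteMeasure (volume.restrict (Set.Icc (-r) r)) := by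
    constructor
    rw [Measure.restrict_apply_univ]
    exact measure_Icc_lt_top
  have hmem : ∀ᵐ p : ℝ × ℝ ∂μ, p.1 ∈ Set.Icc (-r) r ∧ p.2 ∈ Set.Ioc (0:ℝ) 1 := by
    rw [hμdef, Measure.prod_restrict]
    filter_upwards [ae_restrict_mem (measurableSet_Icc.prod measurableSet_Ioc)] with p hp
    exact ⟨hp.1, hp.2⟩
  -- integrability of the weight g on the product
  have hg2 : Integrable (fun p : ℝ × ℝ => (1 - p.2 ^ 2) ^ (a - 1/2)) μ := by
    simpa using (integrable_const (1:ℝ)).mul_prod (BS_g_integrable ha)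
  have hgnn : ∀ t : ℝ, t ∈ Set.Ioc (0:ℝ) 1 → (0:ℝ) ≤ (1 - t ^ 2) ^ (a - 1/2) := by
    intro t ht
    exact Real.rpow_nonneg (by nlinarith [ht.1.le, ht.2] : (0:ℝ) ≤ 1 - t ^ 2) _
  -- master pointwise bound
  have hmaster : ∀ (z : ℂ) (p : ℝ × ℝ), p.1 ∈ Set.Icc (-r) r → p.2 ∈ Set.Ioc (0:ℝ) 1 →
      ‖BSPhi a f z p‖ ≤
        (1 - p.2 ^ 2) ^ (a - 1/2) * (B * W * Real.exp (‖z‖ * r)) := by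
    intro z p hx ht
    have hw0 : (0:ℝ) ≤ |p.1| ^ (2*a+1) := Real.rpow_nonneg (abs_nonneg _) _
    have hg0 : (0:ℝ) ≤ (1 - p.2 ^ 2) ^ (a - 1/2) := hgnn _ ht
    have hre : (-Complex.I * z * (p.1 : ℂ) * (p.2 : ℂ)).re ≤ ‖z‖ * r := by
      refine le_trans (Complex.re_le_norm _) ?_
      have habs : ‖(-Complex.I * z * (p.1 : ℂ) * (p.2 : ℂ))‖
          = ‖z‖ * (|p.1| * |p.2|) := by
        simp [norm_mul]
        ring
      rw [habs]
      have h1 : |p.1| ≤ r := abs_le.mpr ⟨hx.1, hx.2⟩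
      have h2 : |p.2| ≤ 1 := abs_le.mpr ⟨by linarith [ht.1.le], ht.2⟩
      have h3 : |p.1| * |p.2| ≤ r := by nlinarith [abs_nonneg p.1, abs_nonneg p.2]
      exact mul_le_mul_of_nonneg_left h3 (norm_nonneg z)
    have hnorm : ‖BSPhi a f z p‖
        = (1 - p.2 ^ 2) ^ (a - 1/2) *
          (‖f p.1‖ * (|p.1| ^ (2*a+1)) *
            Real.exp ((-Complex.I * z * (p.1 : ℂ) * (p.2 : ℂ)).re)) := by
      simp only [BSPhi, norm_mul, Complex.norm_exp, Complex.norm_real, Real.norm_eq_abs,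
        abs_of_nonneg hw0, abs_of_nonneg hg0]
      ring
    rw [hnorm]
    refine mul_le_mul_of_nonneg_left ?_ hg0
    have h1 : ‖f p.1‖ * (|p.1| ^ (2*a+1)) ≤ B * W :=
      mul_le_mul (hB _) (hW _ hx) hw0 hB0
    have h2 : Real.exp ((-Complex.I * z * (p.1 : ℂ) * (p.2 : ℂ)).re)
        ≤ Real.exp (‖z‖ * r) := Real.exp_le_exp.mpr hre
    exact mul_le_mul h1 h2 (Real.exp_pos _).le (mul_nonneg hB0 hW0)
  -- integrability of Φ z
  have hΦint : ∀ z : ℂ, Integrable (fun p => BSPhi a f z p) μ := by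
    intro z
    refine Integrable.mono' (hg2.mul_const (B * W * Real.exp (‖z‖ * r)))
      ((BSPhi_meas a f hfc z).aestronglyMeasurable) ?_
    filter_upwards [hmem] with p hp
    exact hmaster z p hp.1 hp.2
  -- representation of the transform as an integral over the product measure
  have hrepr : ∀ z : ℂ,
      (∫ x : ℝ, f x * BSkernelC a (-Complex.I * z) x * ((|x| ^ (2*a+1) : ℝ) : ℂ))
        = (BSconst a : ℂ) * ∫ p, BSPhi a f z p ∂μ := by
    intro z
    have h1 : ∀ x : ℝ, f x * BSkernelC a (-Complex.I * z) x * ((|x| ^ (2*a+1) : ℝ) : ℂ)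
        = (BSconst a : ℂ) * ∫ t in Set.Ioc (0:ℝ) 1, BSPhi a f z (x, t) := by
      intro x
      have hJ : (∫ t in Set.Ioc (0:ℝ) 1, BSPhi a f z (x, t))
          = (f x * ((|x| ^ (2*a+1) : ℝ) : ℂ)) *
            ∫ t in Set.Ioc (0:ℝ) 1,
              (((1 - t^2 : ℝ) ^ (a - 1/2) : ℝ) : ℂ) *
                Complex.exp (-Complex.I * z * x * t) := by
        rw [← integral_const_mul]
        congr 1
        funext t
        simp only [BSPhi]
        ring
      rw [BSkernelC, intervalIntegral.integral_of_le zero_le_one, hJ]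
      ring
    have h2 : (∫ x : ℝ, f x * BSkernelC a (-Complex.I * z) x * ((|x| ^ (2*a+1) : ℝ) : ℂ))
        = ∫ x in Set.Icc (-r) r,
            f x * BSkernelC a (-Complex.I * z) x * ((|x| ^ (2*a+1) : ℝ) : ℂ) := by
      refine (setIntegral_eq_integral_of_forall_compl_eq_zero fun x hx => ?_).symm
      have hfx : f x = 0 := image_eq_zero_of_notMem_tsupport (fun h => hx (hsupp h))
      rw [hfx, zero_mul, zero_mul]
    rw [h2]
    calc (∫ x in Set.Icc (-r) r,
            f x * BSkernelC a (-Complex.I * z) x * ((|x| ^ (2*a+1) : ℝ) : ℂ))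
        = ∫ x in Set.Icc (-r) r,
            (BSconst a : ℂ) * ∫ t in Set.Ioc (0:ℝ) 1, BSPhi a f z (x, t) := by
          exact integral_congr_ae (Filter.Eventually.of_forall fun x => h1 x)
      _ = (BSconst a : ℂ) *
            ∫ x in Set.Icc (-r) r, ∫ t in Set.Ioc (0:ℝ) 1, BSPhi a f z (x, t) :=
          integral_const_mul _ _
      _ = (BSconst a : ℂ) * ∫ p, BSPhi a f z p ∂μ := by
          rw [hμdef]
          congr 1
          exact integral_integral (hΦint z)
  -- differentiability
  have hdiff : Differentiable ℂ fun z : ℂ => ∫ p, BSPhi a f z p ∂μ := by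
    intro z₀
    have key := hasDerivAt_integral_of_dominated_loc_of_deriv_le
      (F := fun z p => BSPhi a f z p) (F' := fun z p => BSPhi' a f z p)
      (bound := fun p => (1 - p.2 ^ 2) ^ (a - 1/2) *
        (B * W * Real.exp ((‖z₀‖ + 1) * r) * r))
      (x₀ := z₀) (μ := μ) (Metric.ball_mem_nhds z₀ zero_lt_one)
      (Filter.Eventually.of_forall fun z => (BSPhi_meas a f hfc z).aestronglyMeasurable)
      (hΦint z₀)
      ((BSPhi'_meas a f hfc z₀).aestronglyMeasurable)
      ?_ (hg2.mul_const _) ?_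
    · exact key.2.differentiableAt
    · filter_upwards [hmem] with p hp
      intro z hz
      have hzabs : ‖z‖ ≤ ‖z₀‖ + 1 := by
        have := mem_ball_iff_norm.mp hz
        calc ‖z‖ = ‖z₀ + (z - z₀)‖ := by congr 1; ring
          _ ≤ ‖z₀‖ + ‖z - z₀‖ := norm_add_le _ _
          _ ≤ ‖z₀‖ + 1 := by
              exact add_le_add le_rfl this.le
      have hg0 : (0:ℝ) ≤ (1 - p.2 ^ 2) ^ (a - 1/2) := hgnn _ hp.2
      have hmul : ‖(-Complex.I * (p.1 : ℂ) * (p.2 : ℂ))‖ ≤ r := by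
        have h1 : |p.1| ≤ r := abs_le.mpr ⟨hp.1.1, hp.1.2⟩
        have h2 : |p.2| ≤ 1 := abs_le.mpr ⟨by linarith [hp.2.1.le], hp.2.2⟩
        calc ‖(-Complex.I * (p.1 : ℂ) * (p.2 : ℂ))‖ = |p.1| * |p.2| := by
              simp [norm_mul]
          _ ≤ r * 1 := mul_le_mul h1 h2 (abs_nonneg _) (by linarith)
          _ = r := mul_one r
      calc ‖BSPhi' a f z p‖
          = ‖BSPhi a f z p‖ * ‖(-Complex.I * (p.1 : ℂ) * (p.2 : ℂ))‖ := by
            rw [BSPhi', norm_mul]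
        _ ≤ ((1 - p.2 ^ 2) ^ (a - 1/2) * (B * W * Real.exp (‖z‖ * r))) * r := by
            refine mul_le_mul (hmaster z p hp.1 hp.2) hmul (norm_nonneg _) ?_
            exact mul_nonneg hg0 (mul_nonneg (mul_nonneg hB0 hW0) (Real.exp_pos _).le)
        _ ≤ (1 - p.2 ^ 2) ^ (a - 1/2) *
              (B * W * Real.exp ((‖z₀‖ + 1) * r) * r) := by
            have hexp : Real.exp (‖z‖ * r) ≤ Real.exp ((‖z₀‖ + 1) * r) :=
              Real.exp_le_exp.mpr (mul_le_mul_of_nonneg_right hzabs hr.le)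
            nlinarith [mul_nonneg (mul_nonneg (mul_nonneg hg0 hB0) hW0) hr.le, hexp]
    · filter_upwards with p
      intro z _
      exact BSPhi_hasDerivAt a f z p
  have hfun : (fun z : ℂ =>
      ∫ x : ℝ, f x * BSkernelC a (-Complex.I * z) x * ((|x| ^ (2*a+1) : ℝ) : ℂ))
      = fun z : ℂ => (BSconst a : ℂ) * ∫ p, BSPhi a f z p ∂μ := funext hrepr
  constructor
  · rw [hfun]
    exact hdiff.const_mul _
  -- the exponential bound
  · set G : ℝ := ∫ p, (1 - p.2 ^ 2) ^ (a - 1/2) ∂μ with hGdef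
    have hG0 : (0:ℝ) ≤ G := by
      refine integral_nonneg_of_ae ?_
      filter_upwards [hmem] with p hp
      exact hgnn _ hp.2
    refine ⟨‖(BSconst a : ℂ)‖ * (B * W * G) + 1, by positivity, fun z => ?_⟩
    have hbnd : ‖∫ p, BSPhi a f z p ∂μ‖ ≤ G * (B * W * Real.exp (‖z‖ * r)) := by
      have := norm_integral_le_of_norm_le (μ := μ)
        (f := fun p => BSPhi a f z p)
        (g := fun p => (1 - p.2 ^ 2) ^ (a - 1/2) * (B * W * Real.exp (‖z‖ * r)))
        (hg2.mul_const _) ?_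
      · refine le_trans this ?_
        rw [integral_mul_const]
      · filter_upwards [hmem] with p hp
        exact hmaster z p hp.1 hp.2
    rw [hrepr z]
    calc ‖(BSconst a : ℂ) * ∫ p, BSPhi a f z p ∂μ‖
        = ‖(BSconst a : ℂ)‖ * ‖∫ p, BSPhi a f z p ∂μ‖ := by
          rw [norm_mul]
      _ ≤ ‖(BSconst a : ℂ)‖ * (G * (B * W * Real.exp (‖z‖ * r))) :=
          mul_le_mul_of_nonneg_left hbnd (norm_nonneg _)
      _ = (‖(BSconst a : ℂ)‖ * (B * W * G)) * Real.exp (r * ‖z‖) := by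
          rw [mul_comm (‖z‖) r]; ring
      _ ≤ (‖(BSconst a : ℂ)‖ * (B * W * G) + 1) * Real.exp (r * ‖z‖) := by
          have := Real.exp_pos (r * ‖z‖)
          nlinarith
end

section
/- Let f be a smooth function on ℝ with compact support. Then there exists g ∈ C_c^∞(ℝ) supported in the same interval [-a,a] as f, an entire function h of exponential type a that is rapidly decreasing on horizontal strips (namely h = F(g), the Fourier transform of g), such that for all nonzero z ∈ ℂ, F^{1/2}_{BS}(f)(z) = (h'(z) − h'(0))/z, where F^{1/2}_{BS}(f)(λ) = ∫_ℝ f(x) S^{1/2}_{-iλ}(x) x² dx. Concretely one may take g = -f. -/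
open MeasureTheory Real

lemma BSconst_half : BSconst (1/2) = 1 := by
  unfold BSconst
  rw [Real.Gamma_add_one (by norm_num), show (1/2 : ℝ) + 1/2 = 1 by ring,
    Real.Gamma_one, Real.Gamma_one_half_eq]
  have h : Real.sqrt Real.pi ≠ 0 := by positivity
  field_simp

lemma BSkernelC_half (l : ℂ) (x : ℝ) (hlx : l * (x:ℂ) ≠ 0) :
    BSkernelC (1/2) l x = (Complex.exp (l * x) - 1) / (l * x) := by
  unfold BSkernelC
  rw [BSconst_half]
  have h0 : (1/2 : ℝ) - 1/2 = 0 := by ring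
  simp only [h0, Real.rpow_zero, Complex.ofReal_one, one_mul]
  rw [integral_exp_mul_complex hlx]
  simp

lemma hasDerivAt_my (g : ℝ → ℂ) (hg : Continuous g) (hcs : HasCompactSupport g) (w : ℂ) :
    HasDerivAt (fun w : ℂ => ∫ t : ℝ, g t * Complex.exp (-Complex.I * w * t))
      (∫ t : ℝ, g t * (-Complex.I * t * Complex.exp (-Complex.I * w * t))) w := by
  obtain ⟨M, hM⟩ := hcs.exists_bound_of_continuous hg
  obtain ⟨R, hR⟩ := (IsCompact.isBounded hcs).subset_closedBall 0
  set R' : ℝ := max R 0 with hR'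
  set C : ℝ := M * (R' * Real.exp (R' * (|w.im| + 1))) with hC
  set bound : ℝ → ℝ := Set.indicator (Metric.closedBall (0:ℝ) R) (fun _ => C) with hbound
  have hM0 : 0 ≤ M := le_trans (norm_nonneg (g 0)) (hM 0)
  have key := hasDerivAt_integral_of_dominated_loc_of_deriv_le
    (F := fun (w : ℂ) (t : ℝ) => g t * Complex.exp (-Complex.I * w * t))
    (F' := fun (w : ℂ) (t : ℝ) => g t * (-Complex.I * t * Complex.exp (-Complex.I * w * t)))
    (x₀ := w) (bound := bound) (μ := volume) (Metric.ball_mem_nhds w zero_lt_one) ?_ ?_ ?_ ?_ ?_ ?_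
  · exact key.2
  · filter_upwards with w'
    exact Continuous.aestronglyMeasurable (by fun_prop)
  · apply Continuous.integrable_of_hasCompactSupport (by fun_prop)
    exact hcs.mul_right
  · exact Continuous.aestronglyMeasurable (by fun_prop)
  · filter_upwards with t
    intro w' hw'
    by_cases ht : t ∈ Metric.closedBall (0:ℝ) R
    · rw [hbound, Set.indicator_of_mem ht]
      have htR : |t| ≤ R' := by
        have := Metric.mem_closedBall.mp ht
        simp only [Real.dist_eq, sub_zero] at this
        exact le_trans this (le_max_left _ _)
      have him : |w'.im| ≤ |w.im| + 1 := by
        have h1 : |w'.im - w.im| ≤ ‖w' - w‖ := by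
          simpa using Complex.abs_im_le_norm (w' - w)
        have h2 : ‖w' - w‖ < 1 := by
          simpa [Complex.dist_eq] using (Metric.mem_ball.mp hw')
        calc |w'.im| ≤ |w.im| + |w'.im - w.im| := by
              have := abs_sub_abs_le_abs_sub w'.im w.im
              linarith [abs_sub_abs_le_abs_sub w'.im w.im]
          _ ≤ |w.im| + 1 := by linarith
      have hre : (-Complex.I * w' * (t:ℂ)).re = w'.im * t := by
        simp [Complex.mul_re]
      have hexp : ‖Complex.exp (-Complex.I * w' * (t:ℂ))‖ = Real.exp (w'.im * t) := by
        rw [Complex.norm_exp, hre]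
      have hnI : ‖(-Complex.I * (t:ℂ))‖ = |t| := by
        simp
      calc ‖g t * (-Complex.I * t * Complex.exp (-Complex.I * w' * t))‖
          = ‖g t‖ * (‖(-Complex.I * (t:ℂ))‖ * ‖Complex.exp (-Complex.I * w' * (t:ℂ))‖) := by
            rw [norm_mul, norm_mul]
        _ = ‖g t‖ * (|t| * Real.exp (w'.im * t)) := by rw [hnI, hexp]
        _ ≤ M * (R' * Real.exp (R' * (|w.im| + 1))) := by
            have hexple : w'.im * t ≤ R' * (|w.im| + 1) := by
              calc w'.im * t ≤ |w'.im * t| := le_abs_self _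
                _ = |w'.im| * |t| := abs_mul _ _
                _ ≤ (|w.im| + 1) * R' := by
                    apply mul_le_mul him htR (abs_nonneg _) (by positivity)
                _ = R' * (|w.im| + 1) := by ring
            gcongr
            · exact hM t
        _ = C := rfl
    · have hg0 : g t = 0 := image_eq_zero_of_notMem_tsupport (fun h => ht (hR h))
      rw [hbound, Set.indicator_of_notMem ht]
      simp [hg0]
  · rw [hbound]
    apply MeasureTheory.IntegrableOn.integrable_indicator _ (measurableSet_closedBall)
    exact integrableOn_const (measure_closedBall_lt_top.ne)
  · filter_upwards with t
    intro w' hw'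
    have h1 : HasDerivAt (fun w : ℂ => -Complex.I * w * (t:ℂ)) (-Complex.I * t) w' := by
      simpa using (HasDerivAt.const_mul (-Complex.I) (hasDerivAt_id w')).mul_const (t:ℂ)
    have h3 := HasDerivAt.const_mul (g t) h1.cexp
    convert h3 using 1
    · rfl
    ring

theorem FBS_half_paley_wiener (r : ℝ) (hr : 0 < r) (f : ℝ → ℂ)
    (hf : ContDiff ℝ (⊤ : ℕ∞) f) (hs : HasCompactSupport f)
    (hsupp : tsupport f ⊆ Set.Icc (-r) r) :
    ∃ g : ℝ → ℂ, ContDiff ℝ (⊤ : ℕ∞) g ∧ HasCompactSupport g ∧ tsupport g ⊆ Set.Icc (-r) r ∧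
      g = (fun t : ℝ => -f t) ∧
      ∀ z : ℂ, z ≠ 0 →
        (∫ x : ℝ, f x * BSkernelC (1/2) (-Complex.I * z) x * (x:ℂ)^2) =
          (deriv (fun w : ℂ => ∫ t : ℝ, g t * Complex.exp (-Complex.I * w * t)) z -
           deriv (fun w : ℂ => ∫ t : ℝ, g t * Complex.exp (-Complex.I * w * t)) 0) / z := by
  set g : ℝ → ℂ := fun t => -f t with hgdef
  have hts : tsupport g = tsupport f := by
    unfold tsupport
    congr 1
    simp [hgdef, Function.support]
  have hgcs : HasCompactSupport g := by
    unfold HasCompactSupport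
    rw [hts]; exact hs
  refine ⟨g, hf.neg, hgcs, hts ▸ hsupp, rfl, ?_⟩
  intro z hz
  have hgc : Continuous g := (hf.continuous).neg
  have hder : ∀ w : ℂ, deriv (fun w : ℂ => ∫ t : ℝ, g t * Complex.exp (-Complex.I * w * t)) w
      = ∫ t : ℝ, g t * (-Complex.I * t * Complex.exp (-Complex.I * w * t)) :=
    fun w => (hasDerivAt_my g hgc hgcs w).deriv
  rw [hder z, hder 0]
  have hint : ∀ w : ℂ, Integrable (fun t : ℝ => g t * (-Complex.I * t * Complex.exp (-Complex.I * w * t))) := by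
    intro w
    apply Continuous.integrable_of_hasCompactSupport (by fun_prop)
    exact hgcs.mul_right
  rw [← integral_sub (hint z) (hint 0)]
  have heq : ∀ x : ℝ, f x * BSkernelC (1/2) (-Complex.I * z) x * (x:ℂ)^2 =
      (g x * (-Complex.I * x * Complex.exp (-Complex.I * z * x))
        - g x * (-Complex.I * x * Complex.exp (-Complex.I * 0 * x))) / z := by
    intro x
    by_cases hx : x = 0
    · subst hx
      simp
    · have hlx : (-Complex.I * z) * (x:ℂ) ≠ 0 :=
        mul_ne_zero (mul_ne_zero (neg_ne_zero.mpr Complex.I_ne_zero) hz)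
          (Complex.ofReal_ne_zero.mpr hx)
      rw [BSkernelC_half _ _ hlx]
      have hxne : (x:ℂ) ≠ 0 := Complex.ofReal_ne_zero.mpr hx
      simp only [hgdef, neg_mul, zero_mul, mul_zero, Complex.exp_zero, mul_one]
      have hI2 : Complex.I^2 = -1 := Complex.I_sq
      field_simp
      ring_nf
      rw [Complex.I_sq]
      ring
  calc (∫ x : ℝ, f x * BSkernelC (1/2) (-Complex.I * z) x * (x:ℂ)^2)
      = ∫ x : ℝ, (g x * (-Complex.I * x * Complex.exp (-Complex.I * z * x))
          - g x * (-Complex.I * x * Complex.exp (-Complex.I * 0 * x))) / z := by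
        exact integral_congr_ae (Filter.Eventually.of_forall heq)
    _ = (∫ x : ℝ, (g x * (-Complex.I * x * Complex.exp (-Complex.I * z * x))
          - g x * (-Complex.I * x * Complex.exp (-Complex.I * 0 * x)))) / z :=
        integral_div z _
end
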